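/- arXiv:2507.09484 — 10 statements merged into one kernel-verified Lean document; each statement's English description precedes it below -/
import Mathlib

section
/- Let L = H ⊕ ⊕_{α∈Ψ} L_α be a finite-dimensional Lie algebra over an algebraically closed field F of characteristic 0, where H is abelian, each L_α is one-dimensional with ⁅h, x⁆ = α(h)x for x ∈ L_α and linear functionals α ∈ Ψ ⊆ H*, and the derived subalgebra [L,L] = ⊕_{α∈Ψ} L_α is abelian. If D is a derivation of L with D(H) ⊆ [L,L], then D(L_α) ⊆ L_α for every α ∈ Ψ, provided the functionals in Ψ are pairwise distinct. -/
/-- Lemma 3.3. `L = H ⊕ ⊕_{α∈Ψ} L_α` with `H` abelian, one-dimensional weight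
spaces `L_α = F·(e i)` with pairwise distinct weights, and abelian derived algebra
`[L,L] = ⊕_α L_α`.  If `D` is a derivation with `D(H) ⊆ [L,L]`, then `D(L_α) ⊆ L_α`. -/
theorem derivation_preserves_root_spaces
    (F : Type*) [Field F] [IsAlgClosed F] [CharZero F]
    (L : Type*) [LieRing L] [LieAlgebra F L] [FiniteDimensional F L]
    (H : LieSubalgebra F L) (hHab : ∀ h h' : H, ⁅(h : L), (h' : L)⁆ = 0)
    (ι : Type*) [Fintype ι] (α : ι → Module.Dual F H) (hdist : Function.Injective α)
    (hne : ∀ i, α i ≠ 0)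
    (e : ι → L) (hee : ∀ i, e i ≠ 0) (hind : LinearIndependent F e)
    (hwt : ∀ (i : ι) (h : H), ⁅(h : L), e i⁆ = α i h • e i)
    (hdirect : IsCompl H.toSubmodule (Submodule.span F (Set.range e)))
    (hderived : (LieAlgebra.derivedSeries F L 1).toSubmodule = Submodule.span F (Set.range e))
    (habelian : ∀ i j, ⁅e i, e j⁆ = 0)
    (D : LieDerivation F L L)
    (hD : ∀ h ∈ H, D h ∈ Submodule.span F (Set.range e)) :
    ∀ i, D (e i) ∈ Submodule.span F {e i} := by
  intro i
  -- anything in span of range e brackets to zero with e i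
  have zspan : ∀ z ∈ Submodule.span F (Set.range e), ⁅z, e i⁆ = 0 := by
    intro z hz
    induction hz using Submodule.span_induction with
    | mem v hv => obtain ⟨j, rfl⟩ := hv; exact habelian j i
    | zero => simp
    | add a b _ _ ha hb => rw [add_lie, ha, hb, add_zero]
    | smul t a _ ha => rw [smul_lie, ha, smul_zero]
  -- decompose D (e i)
  have hmem : D (e i) ∈ H.toSubmodule ⊔ Submodule.span F (Set.range e) := by
    rw [hdirect.sup_eq_top]; trivial
  obtain ⟨x, hx, y, hy, hxy⟩ := Submodule.mem_sup.mp hmem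
  obtain ⟨c, hc⟩ := Submodule.mem_span_range_iff_exists_fun F |>.mp hy
  -- key bracket identity
  have key : ∀ h : H, ⁅(h : L), D (e i)⁆ = α i h • D (e i) := by
    intro h
    have h1 := D.apply_lie_eq_add (h : L) (e i)
    rw [hwt i h, map_smul, zspan _ (hD h h.2), add_zero] at h1
    exact h1.symm
  -- coefficient equations
  have keyc : ∀ h : H, α i h • x = ∑ j, (c j * (α j h - α i h)) • e j := by
    intro h
    have hk := key h
    rw [← hxy, lie_add, hHab h ⟨x, hx⟩, zero_add, ← hc] at hk
    have h1 : ⁅(h : L), ∑ j, c j • e j⁆ = ∑ j, (c j * α j h) • e j := by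
      rw [show (⁅(h : L), ∑ j, c j • e j⁆)
          = ∑ j, ⁅(h : L), c j • e j⁆ from map_sum (LieModule.toEnd F L L (h : L)) _ _]
      exact Finset.sum_congr rfl fun j _ => by rw [lie_smul, hwt j h, smul_smul]
    rw [h1, smul_add, Finset.smul_sum] at hk
    have h2 : α i h • x
        = (∑ j, (c j * α j h) • e j) - ∑ j, α i h • (c j • e j) := by
      rw [hk]; abel
    rw [h2, ← Finset.sum_sub_distrib]
    exact Finset.sum_congr rfl fun j _ => by
      rw [smul_smul, ← sub_smul]; ring_nf
  -- the sum lies in span e, x in H, and they are equal up to scalar: both vanish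
  have hzero : ∀ h : H, α i h • x = 0 ∧ ∀ j, c j * (α j h - α i h) = 0 := by
    intro h
    have hmem1 : α i h • x ∈ H.toSubmodule := Submodule.smul_mem _ _ hx
    have hmem2 : α i h • x ∈ Submodule.span F (Set.range e) := by
      rw [keyc h]
      exact Submodule.sum_mem _ fun j _ =>
        Submodule.smul_mem _ _ (Submodule.subset_span ⟨j, rfl⟩)
    have hz : α i h • x = 0 := by
      have := hdirect.disjoint
      rw [Submodule.disjoint_def] at this
      exact this _ hmem1 hmem2
    refine ⟨hz, ?_⟩
    have hsum : ∑ j, (c j * (α j h - α i h)) • e j = 0 := by rw [← keyc h, hz]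
    exact Fintype.linearIndependent_iff.mp hind _ hsum
  -- x = 0
  have hα : ∃ h : H, α i h ≠ 0 := by
    by_contra hcon
    push_neg at hcon
    exact hne i (by ext h; exact hcon h)
  obtain ⟨h₀, hh₀⟩ := hα
  have hx0 : x = 0 := by
    have := (hzero h₀).1
    rcases smul_eq_zero.mp this with h | h
    · exact absurd h hh₀
    · exact h
  -- c j = 0 for j ≠ i
  have hcj : ∀ j, j ≠ i → c j = 0 := by
    intro j hji
    have : α j ≠ α i := fun hαji => hji (hdist hαji)
    have : ∃ h : H, α j h ≠ α i h := by
      by_contra hcon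
      push_neg at hcon
      exact this (by ext h; exact hcon h)
    obtain ⟨h₁, hh₁⟩ := this
    have := (hzero h₁).2 j
    rcases mul_eq_zero.mp this with h | h
    · exact h
    · exact absurd (sub_eq_zero.mp h) hh₁
  -- conclude
  have : D (e i) = c i • e i := by
    rw [← hxy, hx0, zero_add, ← hc]
    rw [Finset.sum_eq_single i (fun j _ hji => by rw [hcj j hji, zero_smul])
      (fun hni => absurd (Finset.mem_univ i) hni)]
  rw [this]
  exact Submodule.smul_mem _ _ (Submodule.subset_span rfl)
end

section
/- Let L = H ⊕ ⊕_{α∈Ψ} L_α be as above, with [L,L] = ⊕_{α∈Ψ} L_α abelian and weights pairwise distinct. If D is a derivation of L satisfying D(h) ∈ ⁅h, L⁆ for all h ∈ H, then there exists z ∈ L such that (D + ad(z))(H) = 0 and (D + ad(z))(L_α) ⊆ L_α for all α ∈ Ψ. -/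
/-- Lemma 3.4. With `L = H ⊕ ⊕_{α∈Ψ} L_α` as in Statement 3, if a derivation `D`
satisfies `D(h) ∈ ⁅h, L⁆` for all `h ∈ H`, then there is `z ∈ L` with `(D + ad z)(H) = 0`
and `(D + ad z)(L_α) ⊆ L_α` for all `α ∈ Ψ`. -/
theorem derivation_adjusted_kills_torus
    (F : Type*) [Field F] [IsAlgClosed F] [CharZero F]
    (L : Type*) [LieRing L] [LieAlgebra F L] [FiniteDimensional F L]
    (H : LieSubalgebra F L) (hHab : ∀ h h' : H, ⁅(h : L), (h' : L)⁆ = 0)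
    (ι : Type*) [Fintype ι] (α : ι → Module.Dual F H) (hdist : Function.Injective α)
    (hne : ∀ i, α i ≠ 0)
    (e : ι → L) (hee : ∀ i, e i ≠ 0) (hind : LinearIndependent F e)
    (hwt : ∀ (i : ι) (h : H), ⁅(h : L), e i⁆ = α i h • e i)
    (hdirect : IsCompl H.toSubmodule (Submodule.span F (Set.range e)))
    (hderived : (LieAlgebra.derivedSeries F L 1).toSubmodule = Submodule.span F (Set.range e))
    (habelian : ∀ i j, ⁅e i, e j⁆ = 0)
    (D : LieDerivation F L L)
    (hD : ∀ h : H, ∃ y : L, D (h : L) = ⁅(h : L), y⁆) :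
    ∃ z : L, (∀ h : H, D (h : L) + ⁅z, (h : L)⁆ = 0) ∧
      (∀ i, D (e i) + ⁅z, e i⁆ ∈ Submodule.span F {e i}) := by
  classical
  have lsum : ∀ (x : L) (c : ι → F) (f : ι → L), ⁅x, ∑ j, c j • f j⁆ = ∑ j, c j • ⁅x, f j⁆ := by
    intro x c f
    rw [← LieAlgebra.ad_apply (R := F), map_sum]
    simp [LieAlgebra.ad_apply]
  have huniq : ∀ c : ι → F, ∑ j, c j • e j = 0 → ∀ j, c j = 0 :=
    Fintype.linearIndependent_iff.mp hind
  have hdecomp : ∀ y : L, ∃ (h : H) (c : ι → F), y = (h : L) + ∑ j, c j • e j := by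
    intro y
    have hy : y ∈ H.toSubmodule ⊔ Submodule.span F (Set.range e) := by
      rw [hdirect.sup_eq_top]; trivial
    obtain ⟨a, ha, b, hb, hab⟩ := Submodule.mem_sup.mp hy
    obtain ⟨c, hc⟩ := (Submodule.mem_span_range_iff_exists_fun F).mp hb
    exact ⟨⟨a, ha⟩, c, by rw [← hab, hc]⟩
  have hbr : ∀ (h : H) (c : ι → F), ⁅(h : L), ∑ j, c j • e j⁆ = ∑ j, (c j * α j h) • e j := by
    intro h c
    rw [lsum]
    refine Finset.sum_congr rfl fun j _ => ?_
    rw [hwt, smul_smul, mul_comm]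
  have hsume : ∀ (c : ι → F) (i : ι), ⁅∑ j, c j • e j, e i⁆ = 0 := by
    intro c i
    rw [← lie_skew, lsum]
    simp [fun j => habelian i j]
  have hg : ∀ h : H, ∃ c : ι → F, D (h : L) = ∑ j, c j • e j := by
    intro h
    obtain ⟨y, hy⟩ := hD h
    obtain ⟨h', c, rfl⟩ := hdecomp y
    refine ⟨fun j => c j * α j h, ?_⟩
    rw [hy, lie_add, hHab h h', zero_add, hbr]
  choose g hgs using hg
  have key : ∀ (h h' : H) (i : ι), g h i * α i h' = g h' i * α i h := by
    intro h h' i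
    have h0 : D ⁅(h : L), (h' : L)⁆ = 0 := by rw [hHab h h', map_zero]
    rw [D.apply_lie_eq_add] at h0
    rw [hgs h', hbr] at h0
    have h1 : ⁅D (h : L), (h' : L)⁆ = -∑ j, (g h j * α j h') • e j := by
      rw [hgs h, ← lie_skew, hbr, neg_inj]
    rw [h1] at h0
    have h2 : ∑ j, ((g h' j * α j h) - (g h j * α j h')) • e j = 0 := by
      simp only [sub_smul, Finset.sum_sub_distrib]
      rw [sub_eq_add_neg]; exact h0
    have h3 := sub_eq_zero.mp (huniq _ h2 i)
    rw [h3]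
  have hex : ∀ i : ι, ∃ h : H, α i h ≠ 0 := by
    intro i
    by_contra hcon
    push_neg at hcon
    exact hne i (by ext h; exact hcon h)
  choose h0 hh0 using hex
  set c : ι → F := fun i => g (h0 i) i / α i (h0 i) with hc
  have hgc : ∀ (h : H) (i : ι), g h i = c i * α i h := by
    intro h i
    rw [hc]
    rw [div_mul_eq_mul_div, eq_div_iff (hh0 i)]
    exact key h (h0 i) i
  refine ⟨∑ j, c j • e j, ?_, ?_⟩
  · intro h
    rw [hgs h, ← lie_skew, hbr,
      show (∑ j, g h j • e j) = ∑ j, (c j * α j h) • e j from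
        Finset.sum_congr rfl fun j _ => by rw [hgc]]
    exact add_neg_cancel _
  · intro i
    rw [hsume c i, add_zero]
    obtain ⟨p, d, hde⟩ := hdecomp (D (e i))
    have main : ∀ h : H, α i h • (p : L) = ∑ j, (d j * α j h - α i h * d j) • e j := by
      intro h
      have h0 : D ⁅(h : L), e i⁆ = α i h • D (e i) := by
        rw [hwt]; exact map_smul D _ _
      rw [D.apply_lie_eq_add, hgs h, hsume (g h) i, add_zero, hde, lie_add, hHab h p, zero_add,
        hbr] at h0
      rw [smul_add] at h0
      have h1 : α i h • (p : L) = ∑ j, (d j * α j h) • e j - α i h • ∑ j, d j • e j := by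
        rw [h0]; abel
      rw [h1, Finset.smul_sum, ← Finset.sum_sub_distrib]
      refine Finset.sum_congr rfl fun j _ => ?_
      rw [sub_smul, smul_smul]
    have hp0 : (p : L) = 0 := by
      have h1 := main (h0 i)
      have hmem : α i (h0 i) • (p : L) ∈ H.toSubmodule ⊓ Submodule.span F (Set.range e) := by
        constructor
        · exact H.toSubmodule.smul_mem _ p.2
        · rw [h1]
          exact Submodule.sum_mem _ fun j _ =>
            Submodule.smul_mem _ _ (Submodule.subset_span ⟨j, rfl⟩)
      rw [hdirect.inf_eq_bot] at hmem
      exact (smul_eq_zero.mp ((Submodule.mem_bot F).mp hmem)).resolve_left (hh0 i)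
    have hdj : ∀ j, j ≠ i → d j = 0 := by
      intro j hj
      have hαne : α j ≠ α i := fun hEq => hj (hdist hEq)
      obtain ⟨h, hh⟩ : ∃ h : H, α j h ≠ α i h := by
        by_contra hcon
        push_neg at hcon
        exact hαne (by ext x; exact hcon x)
      have h1 := main h
      rw [hp0, smul_zero] at h1
      have h2 := huniq _ h1.symm j
      have h3 : d j * (α j h - α i h) = 0 := by linear_combination h2
      exact (mul_eq_zero.mp h3).resolve_right (sub_ne_zero.mpr hh)
    have hfin : D (e i) = d i • e i := by
      rw [hde, hp0, zero_add, Finset.sum_eq_single i (fun j _ hj => by rw [hdj j hj, zero_smul])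
        (fun hi => absurd (Finset.mem_univ i) hi)]
    rw [hfin]
    exact Submodule.mem_span_singleton.mpr ⟨d i, rfl⟩
end

section
/- Let L be a metabelian Lie algebra decomposing as H ⊕ ⊕_{α∈Ψ} L_α with H abelian acting with pairwise distinct nonzero weights α on one-dimensional spaces L_α, and [L,L] = ⊕_{α∈Ψ} L_α abelian. Then every almost inner derivation of L is inner: AID(L) = Inn(L). -/
/-- A functional vanishing on the kernel of a nonzero functional is proportional to it. -/
lemma aux_dual_proportional {F V : Type*} [Field F] [AddCommGroup V] [Module F V]
    (φ ψ : V →ₗ[F] F) (hφ : φ ≠ 0) (h : ∀ v, φ v = 0 → ψ v = 0) :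
    ∃ t : F, ∀ v, ψ v = t * φ v := by
  obtain ⟨v₀, hv₀⟩ : ∃ v₀, φ v₀ ≠ 0 := by
    by_contra hc
    push_neg at hc
    exact hφ (LinearMap.ext fun v => by simp [hc v])
  refine ⟨ψ v₀ / φ v₀, fun v => ?_⟩
  have hker : φ (v - (φ v / φ v₀) • v₀) = 0 := by
    simp only [map_sub, map_smul, smul_eq_mul]
    field_simp
    ring
  have h2 := h _ hker
  simp only [map_sub, map_smul, smul_eq_mul] at h2
  have hv : ψ v = φ v / φ v₀ * ψ v₀ := by
    have := sub_eq_zero.mp h2; linear_combination this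
  rw [hv]; field_simp

/-- Theorem 3.5. For a metabelian Lie algebra `L = H ⊕ ⊕_{α∈Ψ} L_α` with the
structure of a minimal Q-graded subalgebra, every almost inner derivation is inner:
`AID(L) = Inn(L)`. -/
theorem almost_inner_eq_inner_minimal_Q_graded
    (F : Type*) [Field F] [IsAlgClosed F] [CharZero F]
    (L : Type*) [LieRing L] [LieAlgebra F L] [FiniteDimensional F L]
    (H : LieSubalgebra F L) (hHab : ∀ h h' : H, ⁅(h : L), (h' : L)⁆ = 0)
    (ι : Type*) [Fintype ι] (α : ι → Module.Dual F H) (hdist : Function.Injective α)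
    (hne : ∀ i, α i ≠ 0)
    (e : ι → L) (hee : ∀ i, e i ≠ 0) (hind : LinearIndependent F e)
    (hwt : ∀ (i : ι) (h : H), ⁅(h : L), e i⁆ = α i h • e i)
    (hdirect : IsCompl H.toSubmodule (Submodule.span F (Set.range e)))
    (hderived : (LieAlgebra.derivedSeries F L 1).toSubmodule = Submodule.span F (Set.range e))
    (habelian : ∀ i j, ⁅e i, e j⁆ = 0) :
    ∀ D : LieDerivation F L L,
      (∀ x : L, ∃ y : L, D x = ⁅x, y⁆) ↔ (∃ z : L, ∀ x : L, D x = ⁅z, x⁆) := by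
  intro D
  constructor
  · intro hD
    -- finite sum bracket lemmas
    have lie_sum' : ∀ (y : L) (g : ι → L), ⁅y, ∑ i, g i⁆ = ∑ i, ⁅y, g i⁆ := fun y g =>
      map_sum (LieAlgebra.ad F L y) g Finset.univ
    have sum_lie' : ∀ (g : ι → L) (y : L), ⁅∑ i, g i, y⁆ = ∑ i, ⁅g i, y⁆ := by
      intro g y
      rw [← lie_skew, lie_sum', ← Finset.sum_neg_distrib]
      exact Finset.sum_congr rfl fun i _ => lie_skew _ _
    -- every bracket lies in the span of the e i
    have hbr : ∀ x y : L, ⁅x, y⁆ ∈ Submodule.span F (Set.range e) := by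
      intro x y
      rw [← hderived, LieSubmodule.mem_toSubmodule]
      rw [LieAlgebra.derivedSeries_def, LieAlgebra.derivedSeriesOfIdeal_succ]
      exact LieSubmodule.lie_mem_lie (LieSubmodule.mem_top x) (LieSubmodule.mem_top y)
    have heW : ∀ i, e i ∈ Submodule.span F (Set.range e) := fun i =>
      Submodule.subset_span (Set.mem_range_self i)
    -- the span of the e i is abelian
    have hWab : ∀ u ∈ Submodule.span F (Set.range e), ∀ v ∈ Submodule.span F (Set.range e),
        ⁅u, v⁆ = (0 : L) := by
      have h1 : ∀ i, ∀ v ∈ Submodule.span F (Set.range e), ⁅e i, v⁆ = (0 : L) := by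
        intro i v hv
        induction hv using Submodule.span_induction with
        | mem x hx => obtain ⟨j, rfl⟩ := hx; exact habelian i j
        | zero => simp
        | add x y _ _ hx hy => rw [lie_add, hx, hy, add_zero]
        | smul c x _ hx => rw [lie_smul, hx, smul_zero]
      intro u hu v hv
      induction hu using Submodule.span_induction with
      | mem x hx => obtain ⟨j, rfl⟩ := hx; exact h1 j v hv
      | zero => simp
      | add x y _ _ hx hy => rw [add_lie, hx, hy, add_zero]
      | smul c x _ hx => rw [smul_lie, hx, smul_zero]
    -- decomposition of arbitrary elements
    have hdecomp : ∀ x : L, ∃ (h : H) (w : L),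
        w ∈ Submodule.span F (Set.range e) ∧ x = (h : L) + w := by
      intro x
      obtain ⟨a, b, ha, hb, hab⟩ := Submodule.codisjoint_iff_exists_add_eq.mp hdirect.codisjoint x
      exact ⟨⟨a, ha⟩, b, hb, hab.symm⟩
    -- bracket of e i with anything
    have hEbr : ∀ (i : ι) (yH : H) (yE : L), yE ∈ Submodule.span F (Set.range e) →
        ⁅e i, (yH : L) + yE⁆ = (-(α i yH)) • e i := by
      intro i yH yE hyE
      rw [lie_add, hWab _ (heW i) _ hyE, add_zero, ← lie_skew, hwt, neg_smul]
    -- Step 1: D (e i) is a multiple of e i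
    have hDe : ∀ i, ∃ c : F, D (e i) = c • e i := by
      intro i
      obtain ⟨y, hy⟩ := hD (e i)
      obtain ⟨yH, yE, hyE, rfl⟩ := hdecomp y
      exact ⟨-(α i yH), by rw [hy, hEbr i yH yE hyE]⟩
    choose d hd using hDe
    -- uniqueness of coefficients
    have huniq : ∀ c c' : ι → F, ∑ i, c i • e i = ∑ i, c' i • e i → ∀ i, c i = c' i := by
      intro c c' hcc i
      have h0 : ∑ j, (c j - c' j) • e j = 0 := by
        simp only [sub_smul, Finset.sum_sub_distrib, hcc, sub_self]
      exact sub_eq_zero.mp (Fintype.linearIndependent_iff.mp hind (fun j => c j - c' j) h0 i)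
    -- Step 2: the eigenvalues come from a single element zH of H
    obtain ⟨zH, hzH⟩ : ∃ zH : H, ∀ i, d i = α i zH := by
      obtain ⟨y, hy⟩ := hD (∑ i, e i)
      obtain ⟨yH, yE, hyE, rfl⟩ := hdecomp y
      refine ⟨-yH, fun i => ?_⟩
      have h1 : (D (∑ i, e i) : L) = ∑ i, d i • e i := by
        rw [map_sum]; exact Finset.sum_congr rfl fun i _ => hd i
      have h2 : ⁅∑ i, e i, (yH : L) + yE⁆ = ∑ i, (-(α i yH)) • e i := by
        rw [sum_lie']; exact Finset.sum_congr rfl fun i _ => hEbr i yH yE hyE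
      have h3 := huniq _ _ (h1.symm.trans (hy.trans h2)) i
      rw [h3, map_neg]
    have hDe' : ∀ i, D (e i) = ⁅(zH : L), e i⁆ := by
      intro i; rw [hwt, ← hzH i, hd i]
    -- Step 3: coefficients of D on H, as linear functionals
    have hDH : ∀ h : H, D (h : L) ∈ Submodule.span F (Set.range e) := by
      intro h
      obtain ⟨y, hy⟩ := hD (h : L)
      rw [hy]; exact hbr _ _
    let b : Module.Basis ι F (Submodule.span F (Set.range e)) := Module.Basis.span hind
    let Dres : H →ₗ[F] (Submodule.span F (Set.range e)) :=
      LinearMap.codRestrict _ (D.toLinearMap ∘ₗ H.toSubmodule.subtype) hDH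
    let f : H →ₗ[F] (ι →₀ F) := b.repr.toLinearMap ∘ₗ Dres
    have hfrep : ∀ h : H, D (h : L) = ∑ i, f h i • e i := by
      intro h
      have hsum : ((Dres h : Submodule.span F (Set.range e)) : L) = ∑ j, f h j • e j := by
        show ((Dres h : Submodule.span F (Set.range e)) : L) = ∑ j, b.repr (Dres h) j • e j
        conv_lhs => rw [← b.sum_repr (Dres h)]
        rw [Submodule.coe_sum]
        exact Finset.sum_congr rfl fun j _ => by rw [SetLike.val_smul, Module.Basis.span_apply]
      exact hsum
    have hcoeff : ∀ (c : ι → F) (h : H), D (h : L) = ∑ i, c i • e i → ∀ i, f h i = c i := by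
      intro c h hc i
      exact huniq _ _ (by rw [← hfrep h, hc]) i
    -- Step 4: f h i vanishes when α i h = 0
    have hker : ∀ (i : ι) (h : H), α i h = 0 → f h i = 0 := by
      intro i h hαh
      obtain ⟨y, hy⟩ := hD (h : L)
      obtain ⟨yH, yE, hyE, rfl⟩ := hdecomp y
      obtain ⟨s, hs⟩ := (Submodule.mem_span_range_iff_exists_fun F).mp hyE
      have hDh : D (h : L) = ∑ j, (s j * α j h) • e j := by
        rw [hy, lie_add, hHab h yH, zero_add, ← hs, lie_sum']
        refine Finset.sum_congr rfl fun j _ => ?_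
        rw [lie_smul, hwt, smul_smul]
      rw [hcoeff _ h hDh i, hαh, mul_zero]
    -- Step 5: proportionality
    have hprop : ∀ i, ∃ t : F, ∀ h : H, f h i = t * α i h := fun i =>
      aux_dual_proportional (α i) ((Finsupp.lapply i) ∘ₗ f) (hne i) (hker i)
    choose t ht using hprop
    -- the inner element
    refine ⟨(zH : L) + ∑ i, (-(t i)) • e i, fun x => ?_⟩
    have hz_e : ∀ i, D (e i) = ⁅(zH : L) + ∑ j, (-(t j)) • e j, e i⁆ := by
      intro i
      rw [add_lie, sum_lie']
      have h0 : ∑ j, ⁅(-(t j)) • e j, e i⁆ = (0 : L) := by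
        refine Finset.sum_eq_zero fun j _ => ?_
        rw [smul_lie, habelian j i, smul_zero]
      rw [h0, add_zero, hDe' i]
    have hz_H : ∀ h : H, D (h : L) = ⁅(zH : L) + ∑ j, (-(t j)) • e j, (h : L)⁆ := by
      intro h
      rw [add_lie, hHab zH h, zero_add, sum_lie', hfrep h]
      refine Finset.sum_congr rfl fun j _ => ?_
      rw [ht j h, smul_lie, ← lie_skew, hwt, smul_neg, neg_smul, neg_neg, smul_smul]
    obtain ⟨xH, xE, hxE, rfl⟩ := hdecomp x
    obtain ⟨c, hc⟩ := (Submodule.mem_span_range_iff_exists_fun F).mp hxE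
    rw [map_add, lie_add, ← hz_H xH]
    congr 1
    rw [← hc, map_sum, lie_sum']
    refine Finset.sum_congr rfl fun i _ => ?_
    rw [map_smul, lie_smul, ← hz_e i]
  · rintro ⟨z, hz⟩ x
    exact ⟨-z, by rw [hz x, lie_neg, lie_skew]⟩
end

section
/- Let L be a Lie algebra with a basis h₁,…,h_l, x₁,…,x_l over a field F of characteristic 0, with relations ⁅h_i, h_j⁆ = 0, ⁅x_i, x_j⁆ = 0, and ⁅h_i, x_j⁆ = δ_{ij} x_j. Then every element φ of the centroid Cent(L) = {φ ∈ End(L) : φ⁅x,y⁆ = ⁅φ(x),y⁆ = ⁅x,φ(y)⁆ for all x,y} is diagonal with respect to this basis: there exist scalars a₁,…,a_l with φ(h_i) = a_i h_i and φ(x_i) = a_i x_i; in particular Cent(L) is a commutative algebra. -/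
/-- Lemma 4.4. For the Lie algebra `L` with basis `h₁,…,h_l, x₁,…,x_l` and
brackets `⁅h_i,h_j⁆ = ⁅x_i,x_j⁆ = 0`, `⁅h_i,x_j⁆ = δ_{ij} x_j`, every element of the centroid
is diagonal with respect to this basis; in particular the centroid is commutative. -/
theorem centroid_is_diagonal_and_commutative
    (F : Type*) [Field F] [CharZero F] (l : ℕ)
    (L : Type*) [LieRing L] [LieAlgebra F L]
    (h x : Fin l → L) (b : Module.Basis (Fin l ⊕ Fin l) F L)
    (hb : ∀ i, b (Sum.inl i) = h i ∧ b (Sum.inr i) = x i)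
    (hhh : ∀ i j, ⁅h i, h j⁆ = 0) (hxx : ∀ i j, ⁅x i, x j⁆ = 0)
    (hhx : ∀ i j, ⁅h i, x j⁆ = if i = j then x j else 0) :
    (∀ φ : L →ₗ[F] L,
        (∀ u v : L, φ ⁅u, v⁆ = ⁅φ u, v⁆ ∧ φ ⁅u, v⁆ = ⁅u, φ v⁆) →
        ∃ a : Fin l → F, ∀ i, φ (h i) = a i • h i ∧ φ (x i) = a i • x i) ∧
    (∀ φ ψ : L →ₗ[F] L,
        (∀ u v : L, φ ⁅u, v⁆ = ⁅φ u, v⁆ ∧ φ ⁅u, v⁆ = ⁅u, φ v⁆) →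
        (∀ u v : L, ψ ⁅u, v⁆ = ⁅ψ u, v⁆ ∧ ψ ⁅u, v⁆ = ⁅u, ψ v⁆) →
        φ ∘ₗ ψ = ψ ∘ₗ φ) := by
  have hx_ne : ∀ k, x k ≠ 0 := fun k => (hb k).2 ▸ b.ne_zero (Sum.inr k)
  -- key1 : ⁅h k, v⁆ = (coord of v at inr k) • x k
  have key1 : ∀ (k : Fin l) (v : L), ⁅h k, v⁆ = b.repr v (Sum.inr k) • x k := by
    intro k
    let f : L →ₗ[F] L :=
      { toFun := fun v => ⁅h k, v⁆
        map_add' := fun u v => lie_add _ _ _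
        map_smul' := fun c v => lie_smul c _ v }
    let g : L →ₗ[F] L := (b.coord (Sum.inr k)).smulRight (x k)
    have hfg : f = g := by
      apply b.ext
      rintro (i | i)
      · simp only [f, g, LinearMap.coe_mk, AddHom.coe_mk, LinearMap.coe_smulRight,
          Module.Basis.coord_apply, Module.Basis.repr_self, Finsupp.single_apply, Sum.inl.injEq,
          Sum.inr.injEq, reduceCtorEq, if_false]
        rw [(hb i).1, hhh, zero_smul]
      · simp only [f, g, LinearMap.coe_mk, AddHom.coe_mk, LinearMap.coe_smulRight,
          Module.Basis.coord_apply, Module.Basis.repr_self, Finsupp.single_apply, Sum.inr.injEq]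
        rw [(hb i).2, hhx]
        by_cases hik : k = i
        · subst hik; simp
        · simp [hik, Ne.symm hik]
    intro v
    exact DFunLike.congr_fun hfg v
  -- key2 : ⁅v, x k⁆ = (coord of v at inl k) • x k
  have key2 : ∀ (k : Fin l) (v : L), ⁅v, x k⁆ = b.repr v (Sum.inl k) • x k := by
    intro k
    let f : L →ₗ[F] L :=
      { toFun := fun v => ⁅v, x k⁆
        map_add' := fun u v => add_lie _ _ _
        map_smul' := fun c v => smul_lie c v _ }
    let g : L →ₗ[F] L := (b.coord (Sum.inl k)).smulRight (x k)
    have hfg : f = g := by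
      apply b.ext
      rintro (i | i)
      · simp only [f, g, LinearMap.coe_mk, AddHom.coe_mk, LinearMap.coe_smulRight,
          Module.Basis.coord_apply, Module.Basis.repr_self, Finsupp.single_apply, Sum.inl.injEq]
        rw [(hb i).1, hhx]
        by_cases hik : i = k
        · subst hik; simp
        · simp [hik]
      · simp only [f, g, LinearMap.coe_mk, AddHom.coe_mk, LinearMap.coe_smulRight,
          Module.Basis.coord_apply, Module.Basis.repr_self, Finsupp.single_apply, Sum.inl.injEq,
          Sum.inr.injEq, reduceCtorEq, if_false]
        rw [(hb i).2, hxx, zero_smul]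
    intro v
    exact DFunLike.congr_fun hfg v
  have diag : ∀ φ : L →ₗ[F] L,
      (∀ u v : L, φ ⁅u, v⁆ = ⁅φ u, v⁆ ∧ φ ⁅u, v⁆ = ⁅u, φ v⁆) →
      ∃ a : Fin l → F, ∀ i, φ (h i) = a i • h i ∧ φ (x i) = a i • x i := by
    intro φ hφ
    refine ⟨fun i => b.repr (φ (x i)) (Sum.inr i), fun j => ?_⟩
    set a : Fin l → F := fun i => b.repr (φ (x i)) (Sum.inr i) with ha
    have hxj : φ (x j) = a j • x j := by
      have h1 : φ (x j) = ⁅h j, φ (x j)⁆ := by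
        have h2 := (hφ (h j) (x j)).2
        rw [hhx] at h2; simpa using h2
      rw [h1, key1]
    have hcoefr : ∀ k, b.repr (φ (h j)) (Sum.inr k) = 0 := by
      intro k
      have e1 : ⁅h k, φ (h j)⁆ = 0 := by
        have h2 := (hφ (h k) (h j)).2
        rw [hhh, map_zero] at h2
        exact h2.symm
      rw [key1] at e1
      exact (smul_eq_zero.mp e1).resolve_right (hx_ne k)
    have hcoefl : ∀ k, b.repr (φ (h j)) (Sum.inl k) = if j = k then a j else 0 := by
      intro k
      have h2 := (hφ (h j) (x k)).1
      rw [hhx] at h2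
      by_cases hk : j = k
      · subst hk
        rw [if_pos rfl] at h2 ⊢
        rw [hxj, key2] at h2
        exact (smul_left_injective F (hx_ne j) h2.symm)
      · simp only [if_neg hk, map_zero] at h2 ⊢
        rw [key2] at h2
        exact (smul_eq_zero.mp h2.symm).resolve_right (hx_ne k)
    have hhj : φ (h j) = a j • h j := by
      apply b.repr.injective
      ext s
      rcases s with k | k
      · rw [hcoefl k, map_smul]
        simp [← (hb j).1, Module.Basis.repr_self, Finsupp.single_apply]
      · rw [hcoefr k, map_smul]
        simp [← (hb j).1, Module.Basis.repr_self, Finsupp.single_apply]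
    exact ⟨hhj, hxj⟩
  refine ⟨diag, ?_⟩
  intro φ ψ hφ hψ
  obtain ⟨a, haa⟩ := diag φ hφ
  obtain ⟨c, hcc⟩ := diag ψ hψ
  apply b.ext
  rintro (i | i) <;>
    simp [(hb i).1, (hb i).2, (haa i).1, (haa i).2, (hcc i).1, (hcc i).2, map_smul,
      smul_smul, mul_comm]
end

section
/- For the Lie algebra L with basis h₁,…,h_l, x₁,…,x_l and brackets ⁅h_i,h_j⁆ = ⁅x_i,x_j⁆ = 0, ⁅h_i,x_j⁆ = δ_{ij}x_j, the centroid Cent(L) is an l-dimensional commutative associative algebra with basis λ₁,…,λ_l, where λ_i(h_j) = δ_{ij}h_j and λ_i(x_j) = δ_{ij}x_j. -/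
section aux

variable {F L ι : Type*} [Field F] [LieRing L] [LieAlgebra F L]

lemma centroid_ext_left (b : Module.Basis ι F L) (φ : L →ₗ[F] L)
    (H : ∀ s t, φ ⁅b s, b t⁆ = ⁅φ (b s), b t⁆) (u v : L) : φ ⁅u, v⁆ = ⁅φ u, v⁆ := by
  have hmem : ∀ w : L, w ∈ Submodule.span F (Set.range b) := by
    intro w; rw [b.span_eq]; trivial
  induction hmem u using Submodule.span_induction generalizing v with
  | mem w hw =>
    obtain ⟨s, rfl⟩ := hw
    induction hmem v using Submodule.span_induction with
    | mem w2 hw2 => obtain ⟨t, rfl⟩ := hw2; exact H s t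
    | zero => simp
    | add v1 v2 _ _ ih1 ih2 => simp [lie_add, ih1, ih2]
    | smul a v1 _ ih => simp [lie_smul, ih]
  | zero => simp
  | add u1 u2 _ _ ih1 ih2 => simp [add_lie, ih1, ih2]
  | smul a u1 _ ih => simp [smul_lie, ih]

lemma centroid_ext_right (b : Module.Basis ι F L) (φ : L →ₗ[F] L)
    (H : ∀ s t, φ ⁅b s, b t⁆ = ⁅b s, φ (b t)⁆) (u v : L) : φ ⁅u, v⁆ = ⁅u, φ v⁆ := by
  have hmem : ∀ w : L, w ∈ Submodule.span F (Set.range b) := by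
    intro w; rw [b.span_eq]; trivial
  induction hmem u using Submodule.span_induction generalizing v with
  | mem w hw =>
    obtain ⟨s, rfl⟩ := hw
    induction hmem v using Submodule.span_induction with
    | mem w2 hw2 => obtain ⟨t, rfl⟩ := hw2; exact H s t
    | zero => simp
    | add v1 v2 _ _ ih1 ih2 => simp [lie_add, ih1, ih2]
    | smul a v1 _ ih => simp [lie_smul, ih]
  | zero => simp
  | add u1 u2 _ _ ih1 ih2 => simp [add_lie, ih1, ih2]
  | smul a u1 _ ih => simp [smul_lie, ih]

lemma my_lie_sum {α : Type*} [DecidableEq α] (z : L) (s : Finset α) (f : α → L) :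
    ⁅z, ∑ i ∈ s, f i⁆ = ∑ i ∈ s, ⁅z, f i⁆ := by
  classical
  induction s using Finset.induction with
  | empty => simp
  | @insert a s hx ih => rw [Finset.sum_insert hx, Finset.sum_insert hx, lie_add, ih]

lemma my_sum_lie {α : Type*} [DecidableEq α] (z : L) (s : Finset α) (f : α → L) :
    ⁅∑ i ∈ s, f i, z⁆ = ∑ i ∈ s, ⁅f i, z⁆ := by
  classical
  induction s using Finset.induction with
  | empty => simp
  | @insert a s hx ih => rw [Finset.sum_insert hx, Finset.sum_insert hx, add_lie, ih]

end aux

/-- The centroid of the metabelian algebra above is an `l`-dimensional commutative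
associative algebra with basis `λ₁,…,λ_l`, where `λ_i(h_j) = δ_{ij}h_j`, `λ_i(x_j) = δ_{ij}x_j`. -/
theorem centroid_has_diagonal_basis
    (F : Type*) [Field F] [CharZero F] (l : ℕ)
    (L : Type*) [LieRing L] [LieAlgebra F L]
    (h x : Fin l → L) (b : Module.Basis (Fin l ⊕ Fin l) F L)
    (hb : ∀ i, b (Sum.inl i) = h i ∧ b (Sum.inr i) = x i)
    (hhh : ∀ i j, ⁅h i, h j⁆ = 0) (hxx : ∀ i j, ⁅x i, x j⁆ = 0)
    (hhx : ∀ i j, ⁅h i, x j⁆ = if i = j then x j else 0) :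
    ∃ lam : Fin l → (L →ₗ[F] L),
      (∀ i, ∀ u v : L, lam i ⁅u, v⁆ = ⁅lam i u, v⁆ ∧ lam i ⁅u, v⁆ = ⁅u, lam i v⁆) ∧
      (∀ i j, lam i (h j) = (if i = j then h j else 0) ∧
              lam i (x j) = (if i = j then x j else 0)) ∧
      LinearIndependent F lam ∧
      (∀ φ : L →ₗ[F] L,
        (∀ u v : L, φ ⁅u, v⁆ = ⁅φ u, v⁆ ∧ φ ⁅u, v⁆ = ⁅u, φ v⁆) →
        φ ∈ Submodule.span F (Set.range lam)) ∧
      (∀ i j, lam i ∘ₗ lam j = lam j ∘ₗ lam i) := by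
  have hbh : ∀ i, b (Sum.inl i) = h i := fun i => (hb i).1
  have hbx : ∀ i, b (Sum.inr i) = x i := fun i => (hb i).2
  have hxh : ∀ i j, ⁅x j, h i⁆ = -(if i = j then x j else 0) := by
    intro i j; rw [← lie_skew, hhx]
  set lam : Fin l → L →ₗ[F] L := fun i =>
    b.constr F (Sum.elim (fun j => if i = j then h j else 0)
                         (fun j => if i = j then x j else 0)) with hlam
  have lam_h : ∀ i j, lam i (h j) = if i = j then h j else 0 := by
    intro i j
    have e := b.constr_basis F (Sum.elim (fun k => if i = k then h k else 0)
      (fun k => if i = k then x k else 0)) (Sum.inl j)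
    rw [hbh j] at e
    simp only [Sum.elim_inl] at e
    exact e
  have lam_x : ∀ i j, lam i (x j) = if i = j then x j else 0 := by
    intro i j
    have e := b.constr_basis F (Sum.elim (fun k => if i = k then h k else 0)
      (fun k => if i = k then x k else 0)) (Sum.inr j)
    rw [hbx j] at e
    simp only [Sum.elim_inr] at e
    exact e
  refine ⟨lam, ?_, fun i j => ⟨lam_h i j, lam_x i j⟩, ?_, ?_, ?_⟩
  · -- centroid property
    intro i u v
    constructor
    · refine centroid_ext_left b (lam i) (fun s t => ?_) u v
      rcases s with s | s <;> rcases t with t | t <;>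
        simp only [hbh, hbx, hhh, hhx, hxh, hxx, lam_h, lam_x, map_zero, map_neg] <;>
        split_ifs <;> simp_all [lam_h, lam_x, hhh, hhx, hxx, hxh]
    · refine centroid_ext_right b (lam i) (fun s t => ?_) u v
      rcases s with s | s <;> rcases t with t | t <;>
        simp only [hbh, hbx, hhh, hhx, hxh, hxx, lam_h, lam_x, map_zero, map_neg] <;>
        split_ifs <;> simp_all [lam_h, lam_x, hhh, hhx, hxx, hxh]
  · -- linear independence
    rw [Fintype.linearIndependent_iff]
    intro g hg j
    have hz : (∑ i, g i • lam i) (h j) = 0 := by rw [hg]; rfl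
    have : g j • h j = 0 := by
      rw [← hz]
      simp only [LinearMap.sum_apply, LinearMap.smul_apply, lam_h]
      rw [Finset.sum_eq_single j]
      · simp
      · intro k _ hk; simp [if_neg hk]
      · simp
    have hne : h j ≠ 0 := by rw [← hbh j]; exact b.ne_zero _
    rcases smul_eq_zero.mp this with hc | hc
    · exact hc
    · exact absurd hc hne
  · -- spanning
    intro φ hφ
    have hφl : ∀ u v, φ ⁅u, v⁆ = ⁅φ u, v⁆ := fun u v => (hφ u v).1
    have hφr : ∀ u v, φ ⁅u, v⁆ = ⁅u, φ v⁆ := fun u v => (hφ u v).2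
    -- bracket formulas
    have br_h : ∀ (j : Fin l) (u : L), ⁅h j, u⁆ = b.repr u (Sum.inr j) • x j := by
      intro j u
      conv_lhs => rw [← b.sum_repr u]
      rw [my_lie_sum, Fintype.sum_sum_type]
      simp only [lie_smul, hbh, hbx, hhh, hhx, smul_zero, smul_ite]
      simp [Finset.sum_ite_eq, Finset.sum_ite_eq']
    have br_x : ∀ (k : Fin l) (u : L), ⁅u, x k⁆ = b.repr u (Sum.inl k) • x k := by
      intro k u
      conv_lhs => rw [← b.sum_repr u]
      rw [my_sum_lie, Fintype.sum_sum_type]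
      simp only [smul_lie, hbh, hbx, hhx, hxx, smul_zero, smul_ite]
      simp [Finset.sum_ite_eq, Finset.sum_ite_eq']
    set c : Fin l → F := fun j => b.repr (φ (x j)) (Sum.inr j) with hc
    have hφx : ∀ j, φ (x j) = c j • x j := by
      intro j
      have h1 : φ (x j) = ⁅h j, φ (x j)⁆ := by
        rw [← hφr (h j) (x j), hhx]; simp
      rw [h1, br_h]
    have hxne : ∀ k, x k ≠ 0 := fun k => by rw [← hbx k]; exact b.ne_zero _
    have hφh : ∀ j, φ (h j) = c j • h j := by
      intro j
      apply b.ext_elem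
      intro s
      rcases s with k | k
      · have h1 : ⁅φ (h j), x k⁆ = φ ⁅h j, x k⁆ := (hφl (h j) (x k)).symm
        rw [br_x, hhx] at h1
        have h2 : b.repr (φ (h j)) (Sum.inl k) • x k = (if j = k then c k else 0) • x k := by
          rw [h1]
          split_ifs with hjk
          · rw [hφx k]
          · simp
        have h3 := smul_left_injective F (hxne k) h2
        rw [h3, ← hbh j]
        by_cases hjk : j = k
        · subst hjk; simp
        · simp [Finsupp.single_apply, hjk, Ne.symm hjk]
      · have h1 : ⁅h k, φ (h j)⁆ = φ ⁅h k, h j⁆ := (hφr (h k) (h j)).symm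
        rw [br_h, hhh, map_zero] at h1
        rcases smul_eq_zero.mp h1 with hz | hz
        · rw [hz, ← hbh j]
          simp [Finsupp.single_apply]
        · exact absurd hz (hxne k)
    have hsum : φ = ∑ j, c j • lam j := by
      apply b.ext
      intro s
      rcases s with j | j
      · rw [hbh j]
        simp only [LinearMap.sum_apply, LinearMap.smul_apply, lam_h, hφh j, smul_ite, smul_zero]
        simp [Finset.sum_ite_eq, Finset.sum_ite_eq']
      · rw [hbx j]
        simp only [LinearMap.sum_apply, LinearMap.smul_apply, lam_x, hφx j, smul_ite, smul_zero]
        simp [Finset.sum_ite_eq, Finset.sum_ite_eq']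
    rw [hsum]
    exact Submodule.sum_mem _ (fun j _ =>
      Submodule.smul_mem _ _ (Submodule.subset_span ⟨j, rfl⟩))
  · -- commutativity
    intro i j
    apply b.ext
    intro s
    rcases s with k | k <;>
      simp only [LinearMap.comp_apply, hbh, hbx, lam_h, lam_x] <;>
      split_ifs <;> simp_all [lam_h, lam_x]
end

section
/- Let L = H ⊕ ⊕_{α∈Ψ} L_α be a metabelian Lie algebra as above with m = dim [L,L] > l = dim H. Then there exists a derivation δ of L with δ(H) = 0 and δ acting by a scalar on each L_α that is not inner. -/
/-- If `m = dim [L,L] > l = dim H`, then there is a derivation `δ` of `L`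
annihilating `H` and acting by a scalar on each weight space `L_α` which is not inner. -/
theorem exists_noninner_diagonal_derivation
    (F : Type*) [Field F] [IsAlgClosed F] [CharZero F]
    (L : Type*) [LieRing L] [LieAlgebra F L] [FiniteDimensional F L]
    (H : LieSubalgebra F L) (hHab : ∀ h h' : H, ⁅(h : L), (h' : L)⁆ = 0)
    (ι : Type*) [Fintype ι] (α : ι → Module.Dual F H) (hdist : Function.Injective α)
    (hne : ∀ i, α i ≠ 0)
    (e : ι → L) (hee : ∀ i, e i ≠ 0) (hind : LinearIndependent F e)
    (hwt : ∀ (i : ι) (h : H), ⁅(h : L), e i⁆ = α i h • e i)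
    (hdirect : IsCompl H.toSubmodule (Submodule.span F (Set.range e)))
    (hderived : (LieAlgebra.derivedSeries F L 1).toSubmodule = Submodule.span F (Set.range e))
    (habelian : ∀ i j, ⁅e i, e j⁆ = 0)
    (hcard : Fintype.card ι > Module.finrank F H) :
    ∃ δ : LieDerivation F L L,
      (∀ h ∈ H, δ h = 0) ∧ (∀ i, ∃ a : F, δ (e i) = a • e i) ∧
      ¬ ∃ z : L, ∀ w : L, δ w = ⁅z, w⁆ := by
  classical
  set V : Submodule F L := Submodule.span F (Set.range e) with hV
  -- elements of V commute with each e i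
  have hVcomm : ∀ s ∈ V, ∀ i, ⁅s, e i⁆ = 0 := by
    intro s hs i
    induction hs using Submodule.span_induction with
    | mem x hx => obtain ⟨j, rfl⟩ := hx; exact habelian j i
    | zero => simp
    | add x y _ _ hx hy => rw [add_lie, hx, hy, add_zero]
    | smul a x _ hx => rw [smul_lie, hx, smul_zero]
  -- pick c not in the range of h ↦ (α i h)
  set Φ : H →ₗ[F] (ι → F) := LinearMap.pi (fun i => α i) with hΦ
  have hrange : LinearMap.range Φ ≠ ⊤ := by
    intro h
    have h1 : Module.finrank F (LinearMap.range Φ) ≤ Module.finrank F H :=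
      LinearMap.finrank_range_le Φ
    rw [h] at h1
    rw [finrank_top, Module.finrank_pi] at h1
    omega
  obtain ⟨c, hc⟩ : ∃ c : ι → F, c ∉ LinearMap.range Φ := by
    by_contra h
    push_neg at h
    exact hrange (Submodule.eq_top_iff'.mpr h)
  -- construct the linear map
  have hVcompl : IsCompl V H.toSubmodule := hdirect.symm
  set proj : L →ₗ[F] V := Submodule.linearProjOfIsCompl V H.toSubmodule hVcompl with hproj
  set b : Module.Basis ι F V := Module.Basis.span hind with hb
  set f : V →ₗ[F] L := Module.Basis.constr b F (fun i => c i • e i) with hf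
  set D : L →ₗ[F] L := f ∘ₗ proj with hD
  have hDh : ∀ h ∈ H, D h = 0 := by
    intro h hh
    have : proj h = 0 := Submodule.linearProjOfIsCompl_apply_right hVcompl ⟨h, hh⟩
    simp [hD, this]
  have hDe : ∀ i, D (e i) = c i • e i := by
    intro i
    have hmem : e i ∈ V := Submodule.subset_span ⟨i, rfl⟩
    have h1 : proj (e i) = ⟨e i, hmem⟩ :=
      Submodule.linearProjOfIsCompl_apply_left hVcompl ⟨e i, hmem⟩
    have h2 : b i = ⟨e i, hmem⟩ := by
      ext; exact congrArg Subtype.val (Module.Basis.span_apply hind i)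
    have h3 : f (b i) = c i • e i := Module.Basis.constr_basis b F _ i
    rw [hD, LinearMap.comp_apply, h1, ← h2, h3]
  -- Leibniz rule
  have hspan : H.toSubmodule ⊔ V = ⊤ := hdirect.sup_eq_top
  have htop : Submodule.span F ((H : Set L) ∪ Set.range e) = ⊤ := by
    rw [Submodule.span_union, show ((H : Set L)) = (H.toSubmodule : Set L) from rfl,
      Submodule.span_eq]
    exact hspan
  have leib : ∀ x y : L, D ⁅x, y⁆ = ⁅D x, y⁆ + ⁅x, D y⁆ := by
    have key : ∀ x ∈ Submodule.span F ((H : Set L) ∪ Set.range e),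
        ∀ y ∈ Submodule.span F ((H : Set L) ∪ Set.range e),
        D ⁅x, y⁆ = ⁅D x, y⁆ + ⁅x, D y⁆ := by
      intro x hx
      induction hx using Submodule.span_induction with
      | mem x hx =>
        intro y hy
        induction hy using Submodule.span_induction with
        | mem y hy =>
          rcases hx with hx | ⟨i, rfl⟩
          · rcases hy with hy | ⟨j, rfl⟩
            · have h0 : ⁅x, y⁆ = (0 : L) := hHab ⟨x, hx⟩ ⟨y, hy⟩
              rw [h0, hDh x hx, hDh y hy, map_zero, zero_lie, lie_zero, add_zero]
            · have h0 : ⁅x, e j⁆ = α j ⟨x, hx⟩ • e j := hwt j ⟨x, hx⟩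
              rw [h0, map_smul, hDe j, hDh x hx, zero_lie, zero_add, lie_smul, h0,
                smul_smul, smul_smul, mul_comm]
          · rcases hy with hy | ⟨j, rfl⟩
            · have h0 : ⁅(y : L), e i⁆ = α i ⟨y, hy⟩ • e i := hwt i ⟨y, hy⟩
              rw [← lie_skew y (e i)] at h0
              have h0' : ⁅e i, (y : L)⁆ = -(α i ⟨y, hy⟩ • e i) := by
                rw [← h0, neg_neg]
              rw [h0', map_neg, map_smul, hDe i, hDh y hy, lie_zero, add_zero,
                smul_lie, h0', smul_neg, smul_smul, smul_smul, mul_comm]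
            · rw [habelian i j, map_zero, hDe i, hDe j, smul_lie, lie_smul,
                habelian i j, smul_zero, smul_zero, add_zero]
        | zero => simp
        | add y z _ _ hy hz => rw [lie_add, map_add, hy, hz, map_add, lie_add, lie_add]; abel
        | smul a y _ hy => rw [lie_smul, map_smul, hy, map_smul, lie_smul, lie_smul, smul_add]
      | zero => intro y hy; simp
      | add x z _ _ hx hz =>
        intro y hy
        rw [add_lie, map_add, hx y hy, hz y hy, map_add, add_lie, add_lie]; abel
      | smul a x _ hx =>
        intro y hy
        simp only [smul_lie, map_smul, hx y hy, smul_add]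
    intro x y
    exact key x (htop ▸ Submodule.mem_top) y (htop ▸ Submodule.mem_top)
  set δ : LieDerivation F L L :=
    { toLinearMap := D
      leibniz' := fun a b => by
        have := leib a b
        rw [this, ← lie_skew b (D a)]
        abel } with hδ
  refine ⟨δ, hDh, fun i => ⟨c i, hDe i⟩, ?_⟩
  rintro ⟨z, hz⟩
  have hzmem : z ∈ H.toSubmodule ⊔ V := hspan ▸ Submodule.mem_top
  obtain ⟨zh, hzh, zv, hzv, rfl⟩ := Submodule.mem_sup.mp hzmem
  apply hc
  refine ⟨⟨zh, hzh⟩, ?_⟩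
  funext i
  have h1 : c i • e i = ⁅zh + zv, e i⁆ := by rw [← hz (e i)]; exact (hDe i).symm
  rw [add_lie, hwt i ⟨zh, hzh⟩, hVcomm zv hzv i, add_zero] at h1
  have h2 : (c i - α i ⟨zh, hzh⟩) • e i = 0 := by
    rw [sub_smul, h1, sub_self]
  have h3 := (smul_eq_zero.mp h2).resolve_right (hee i)
  simp only [hΦ, LinearMap.pi_apply]
  exact (sub_eq_zero.mp h3).symm
end

section
/- Let L be a finite-dimensional Lie algebra over F and S = F[t,t⁻¹]. Every derivation d of the loop algebra L ⊗ S satisfying d(x ⊗ s₁s₂) = d(x ⊗ s₁)s₂ for all x ∈ L, s₁, s₂ ∈ S is determined by finitely many derivations D_i of L via d(x ⊗ s) = Σᵢ Dᵢ(x) ⊗ tⁱ s; i.e., the space D_S(L⊗S) of S-linear derivations is isomorphic to Der(L) ⊗ S. -/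
open scoped TensorProduct

set_option maxHeartbeats 1000000 in
/-- Lemma 4.2 (first part). Every `S`-linear derivation `d` of the loop algebra
`L ⊗ S` (`S = F[t,t⁻¹]`) is determined by finitely many derivations `Dᵢ` of `L` via
`d(x ⊗ s) = Σᵢ Dᵢ(x) ⊗ tⁱ·s`; i.e. `D_S(L⊗S) ≅ Der(L) ⊗ S`. -/
theorem sLinear_derivations_of_loop_algebra
    (F : Type*) [Field F] [CharZero F]
    (L : Type*) [LieRing L] [LieAlgebra F L] [FiniteDimensional F L]
    (d : LaurentPolynomial F ⊗[F] L →ₗ[F] LaurentPolynomial F ⊗[F] L)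
    (hder : ∀ u v : LaurentPolynomial F ⊗[F] L, d ⁅u, v⁆ = ⁅d u, v⁆ + ⁅u, d v⁆)
    (hS : ∀ (s₁ s₂ : LaurentPolynomial F) (y : L),
      d ((s₁ * s₂) ⊗ₜ[F] y) = s₂ • d (s₁ ⊗ₜ[F] y)) :
    ∃ (I : Finset ℤ) (Dd : ℤ → LieDerivation F L L),
      ∀ (s : LaurentPolynomial F) (y : L),
        d (s ⊗ₜ[F] y) = ∑ i ∈ I, (LaurentPolynomial.T i * s) ⊗ₜ[F] (Dd i y) := by
  classical
  let e : LaurentPolynomial F ⊗[F] L ≃ₗ[F] (ℤ →₀ L) :=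
    (TensorProduct.congr (AddMonoidAlgebra.coeffLinearEquiv F) (LinearEquiv.refl F L)).trans
      (TensorProduct.finsuppScalarLeft F L ℤ)
  -- representation of any element
  have hrep : ∀ w : LaurentPolynomial F ⊗[F] L,
      w = ∑ i ∈ (e w).support, (LaurentPolynomial.T i) ⊗ₜ[F] (e w i) := by
    intro w
    conv_lhs => rw [← e.symm_apply_apply w, ← Finsupp.sum_single (e w)]
    rw [Finsupp.sum, map_sum]
    refine Finset.sum_congr rfl fun i _ => ?_
    show (TensorProduct.congr (AddMonoidAlgebra.coeffLinearEquiv F) (LinearEquiv.refl F L)).symm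
      ((TensorProduct.finsuppScalarLeft F L ℤ).symm _) = _
    rw [TensorProduct.finsuppScalarLeft_symm_apply_single, TensorProduct.congr_symm_tmul]
    rfl
  -- coefficient of a pure tensor
  have hcoeff : ∀ (s : LaurentPolynomial F) (z : L) (i : ℤ), e (s ⊗ₜ[F] z) i = s.coeff i • z :=
    fun s z i => by
      show TensorProduct.finsuppScalarLeft F L ℤ
        (TensorProduct.congr (AddMonoidAlgebra.coeffLinearEquiv F) (LinearEquiv.refl F L)
          (s ⊗ₜ[F] z)) i = _
      rw [TensorProduct.congr_tmul]
      exact TensorProduct.finsuppScalarLeft_apply_tmul_apply s.coeff z i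
  -- brackets and coefficients
  have hbr : ∀ (w : LaurentPolynomial F ⊗[F] L) (y : L) (i : ℤ),
      e ⁅w, (1:LaurentPolynomial F) ⊗ₜ[F] y⁆ i = ⁅e w i, y⁆ := by
    intro w y i
    induction w using TensorProduct.induction_on with
    | zero =>
        have h : (⁅(0 : LaurentPolynomial F ⊗[F] L), (1:LaurentPolynomial F) ⊗ₜ[F] y⁆ :
            LaurentPolynomial F ⊗[F] L) = 0 :=
          zero_lie (L := LaurentPolynomial F ⊗[F] L) (M := LaurentPolynomial F ⊗[F] L) _
        rw [h, map_zero]; simp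
    | tmul s z =>
        rw [LieAlgebra.ExtendScalars.bracket_tmul, mul_one, hcoeff, hcoeff, smul_lie]
    | add u v hu hv =>
        have h : (⁅u + v, (1:LaurentPolynomial F) ⊗ₜ[F] y⁆ : LaurentPolynomial F ⊗[F] L)
            = ⁅u, (1:LaurentPolynomial F) ⊗ₜ[F] y⁆ + ⁅v, (1:LaurentPolynomial F) ⊗ₜ[F] y⁆ :=
          add_lie (L := LaurentPolynomial F ⊗[F] L) (M := LaurentPolynomial F ⊗[F] L) _ _ _
        rw [h, map_add, Finsupp.add_apply, hu, hv, map_add, Finsupp.add_apply, add_lie]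
  have hbl : ∀ (w : LaurentPolynomial F ⊗[F] L) (x : L) (i : ℤ),
      e ⁅(1:LaurentPolynomial F) ⊗ₜ[F] x, w⁆ i = ⁅x, e w i⁆ := by
    intro w x i
    induction w using TensorProduct.induction_on with
    | zero =>
        have h : (⁅(1:LaurentPolynomial F) ⊗ₜ[F] x, (0 : LaurentPolynomial F ⊗[F] L)⁆ :
            LaurentPolynomial F ⊗[F] L) = 0 :=
          lie_zero (L := LaurentPolynomial F ⊗[F] L) (M := LaurentPolynomial F ⊗[F] L) _
        rw [h, map_zero]; simp
    | tmul s z =>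
        rw [LieAlgebra.ExtendScalars.bracket_tmul, one_mul, hcoeff, hcoeff, lie_smul]
    | add u v hu hv =>
        have h : (⁅(1:LaurentPolynomial F) ⊗ₜ[F] x, u + v⁆ : LaurentPolynomial F ⊗[F] L)
            = ⁅(1:LaurentPolynomial F) ⊗ₜ[F] x, u⁆ + ⁅(1:LaurentPolynomial F) ⊗ₜ[F] x, v⁆ :=
          lie_add (L := LaurentPolynomial F ⊗[F] L) (M := LaurentPolynomial F ⊗[F] L) _ _ _
        rw [h, map_add, Finsupp.add_apply, hu, hv, map_add, Finsupp.add_apply, lie_add]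
  let Φ : L →ₗ[F] (ℤ →₀ L) :=
    e.toLinearMap ∘ₗ d ∘ₗ TensorProduct.mk F (LaurentPolynomial F) L 1
  have hΦ : ∀ y : L, Φ y = e (d ((1:LaurentPolynomial F) ⊗ₜ[F] y)) := fun _ => rfl
  -- Leibniz rule for coefficients
  have hleib : ∀ (i : ℤ) (x y : L), Φ ⁅x, y⁆ i = ⁅x, Φ y i⁆ - ⁅y, Φ x i⁆ := by
    intro i x y
    have h1 : ((1:LaurentPolynomial F) ⊗ₜ[F] ⁅x, y⁆ : LaurentPolynomial F ⊗[F] L)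
        = ⁅(1:LaurentPolynomial F) ⊗ₜ[F] x, (1:LaurentPolynomial F) ⊗ₜ[F] y⁆ := by
      rw [LieAlgebra.ExtendScalars.bracket_tmul, one_mul]
    rw [hΦ, h1, hder, map_add, Finsupp.add_apply, hbr, hbl, ← hΦ, ← hΦ, ← lie_skew y (Φ x i)]
    abel
  let Dd : ℤ → LieDerivation F L L := fun i =>
    { toLinearMap := (Finsupp.lapply i) ∘ₗ Φ
      leibniz' := fun x y => hleib i x y }
  have hDd : ∀ (i : ℤ) (y : L), Dd i y = Φ y i := fun _ _ => rfl
  -- finite support, uniformly in y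
  let b := Module.finBasis F L
  let I : Finset ℤ := Finset.univ.biUnion fun j => (Φ (b j)).support
  have hsupp : ∀ y : L, (Φ y).support ⊆ I := by
    intro y i hi
    rw [Finsupp.mem_support_iff] at hi
    by_contra hI
    apply hi
    have hj : ∀ j, Φ (b j) i = 0 := by
      intro j
      by_contra h
      exact hI (Finset.mem_biUnion.mpr ⟨j, Finset.mem_univ _, Finsupp.mem_support_iff.mpr h⟩)
    calc Φ y i = Φ (∑ j, b.repr y j • b j) i := by rw [b.sum_repr]
      _ = ∑ j, b.repr y j • Φ (b j) i := by
          rw [map_sum, Finsupp.finset_sum_apply]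
          refine Finset.sum_congr rfl fun j _ => ?_
          rw [map_smul, Finsupp.smul_apply]
      _ = 0 := by simp [hj]
  refine ⟨I, Dd, fun s y => ?_⟩
  have h1 : d (s ⊗ₜ[F] y) = s • d ((1:LaurentPolynomial F) ⊗ₜ[F] y) := by
    have := hS 1 s y; rwa [one_mul] at this
  rw [h1, hrep (d ((1:LaurentPolynomial F) ⊗ₜ[F] y)), Finset.smul_sum]
  have hterm : ∀ i : ℤ, s • ((LaurentPolynomial.T i : LaurentPolynomial F) ⊗ₜ[F]
      (e (d ((1:LaurentPolynomial F) ⊗ₜ[F] y)) i))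
      = (LaurentPolynomial.T i * s) ⊗ₜ[F] (Dd i y) := by
    intro i
    rw [TensorProduct.smul_tmul', smul_eq_mul, mul_comm, hDd, hΦ]
  rw [Finset.sum_congr rfl fun i _ => hterm i]
  refine Finset.sum_subset (hsupp y) fun i _ hi => ?_
  have h0 : Dd i y = 0 := Finsupp.notMem_support_iff.mp hi
  rw [h0, TensorProduct.tmul_zero]
end

section
/- Let L be the Lie algebra with basis h₁,…,h_l,x₁,…,x_l and brackets ⁅h_i,h_j⁆=⁅x_i,x_j⁆=0, ⁅h_i,x_j⁆=δ_{ij}x_j, and S = F[t,t⁻¹]. Then the centroid of the loop algebra L⊗S is commutative and is isomorphic to Cent(L) ⊗ S. -/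
open scoped TensorProduct

/-- The centroid of a Lie algebra, as a submodule of its endomorphism algebra. -/
def lieCentroid (F A : Type*) [CommRing F] [LieRing A] [LieAlgebra F A] :
    Submodule F (A →ₗ[F] A) where
  carrier := {φ | ∀ u v : A, φ ⁅u, v⁆ = ⁅φ u, v⁆ ∧ φ ⁅u, v⁆ = ⁅u, φ v⁆}
  zero_mem' := by intro u v; simp
  add_mem' := by
    intro φ ψ hφ hψ u v
    refine ⟨?_, ?_⟩
    · simp only [LinearMap.add_apply, (hφ u v).1, (hψ u v).1, add_lie]
    · simp only [LinearMap.add_apply, (hφ u v).2, (hψ u v).2, lie_add]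
  smul_mem' := by
    intro c φ hφ u v
    refine ⟨?_, ?_⟩
    · simp only [LinearMap.smul_apply, (hφ u v).1, smul_lie]
    · simp only [LinearMap.smul_apply, (hφ u v).2, lie_smul]

/-- The loop algebra `S ⊗[F] L` is a Lie algebra over `F`. -/
noncomputable instance loopLieAlgebra (F : Type*) [Field F]
    (L : Type*) [LieRing L] [LieAlgebra F L] :
    LieAlgebra F (LaurentPolynomial F ⊗[F] L) where
  lie_smul c u v := by
    have h1 : c • v = (algebraMap F (LaurentPolynomial F) c) • v :=
      (algebraMap_smul (LaurentPolynomial F) c v).symm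
    have h2 : c • ⁅u, v⁆ = (algebraMap F (LaurentPolynomial F) c) • ⁅u, v⁆ :=
      (algebraMap_smul (LaurentPolynomial F) c ⁅u, v⁆).symm
    rw [h1, h2]
    exact lie_smul (R := LaurentPolynomial F)
      (L := LaurentPolynomial F ⊗[F] L) (M := LaurentPolynomial F ⊗[F] L) _ _ _

section Master

attribute [local instance 100] LieRing.ofAssociativeRing

variable {F : Type*} [Field F] {l : ℕ} {R : Type*} [CommRing R] [Algebra F R]
  {M : Type*} [LieRing M] [LieAlgebra R M] [LieAlgebra F M]
  [IsScalarTower F R M] [SMulCommClass F R M] [SMulCommClass R F M]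
  (β : Module.Basis (Fin l ⊕ Fin l) R M)

private lemma coeff_cancel {k : Fin l ⊕ Fin l} {r r' : R}
    (hr : r • β k = r' • β k) : r = r' := by
  have := congrArg (fun w => β.repr w k) hr
  simpa [Module.Basis.repr_self] using this

variable (H1 : ∀ i j : Fin l, ⁅β (Sum.inl i), β (Sum.inl j)⁆ = 0)
  (H2 : ∀ i j : Fin l, ⁅β (Sum.inr i), β (Sum.inr j)⁆ = 0)
  (H3 : ∀ i j : Fin l, ⁅β (Sum.inl i), β (Sum.inr j)⁆ = if i = j then β (Sum.inr j) else 0)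

include H1 H3 in
private lemma key1 (i : Fin l) (w : M) :
    ⁅β (Sum.inl i), w⁆ = β.repr w (Sum.inr i) • β (Sum.inr i) := by
  have hmaps : (LieAlgebra.ad R M (β (Sum.inl i)) : M →ₗ[R] M) =
      LinearMap.toSpanSingleton R M (β (Sum.inr i)) ∘ₗ
        Finsupp.lapply (Sum.inr i) ∘ₗ (β.repr : M ≃ₗ[R] _).toLinearMap := by
    refine β.ext fun k => ?_
    rcases k with j | j
    · simp [LieAlgebra.ad_apply, H1 i j, Module.Basis.repr_self, Finsupp.single_apply]
    · rcases eq_or_ne i j with rfl | hij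
      · simp [LieAlgebra.ad_apply, H3 i i, Module.Basis.repr_self]
      · simp [LieAlgebra.ad_apply, H3 i j, hij, hij.symm, Module.Basis.repr_self, Finsupp.single_apply]
  have := LinearMap.congr_fun hmaps w
  simpa [LieAlgebra.ad_apply] using this

include H2 H3 in
private lemma key2 (j : Fin l) (w : M) :
    ⁅w, β (Sum.inr j)⁆ = β.repr w (Sum.inl j) • β (Sum.inr j) := by
  have hmaps : (LieModule.toEnd R M M).toLinearMap.flip (β (Sum.inr j)) =
      LinearMap.toSpanSingleton R M (β (Sum.inr j)) ∘ₗ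
        Finsupp.lapply (Sum.inl j) ∘ₗ (β.repr : M ≃ₗ[R] _).toLinearMap := by
    refine β.ext fun k => ?_
    rcases k with i | i
    · rcases eq_or_ne i j with rfl | hij
      · simp [H3 i i, Module.Basis.repr_self]
      · simp [H3 i j, hij, hij.symm, Module.Basis.repr_self, Finsupp.single_apply]
    · simp [H2 i j, Module.Basis.repr_self, Finsupp.single_apply]
  have := LinearMap.congr_fun hmaps w
  simpa using this

include H3 in
private lemma H4 (i j : Fin l) :
    ⁅β (Sum.inr i), β (Sum.inl j)⁆ = if j = i then -β (Sum.inr i) else 0 := by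
  rw [← neg_neg ⁅β (Sum.inr i), β (Sum.inl j)⁆, ← lie_skew, H3 j i]
  split <;> simp

include H1 H2 H3 in
private lemma master_class {φ : M →ₗ[F] M} (hφ : φ ∈ lieCentroid F M) :
    ∃ f : Fin l → R, ∀ (s : R) (k : Fin l ⊕ Fin l),
      φ (s • β k) = (f (Sum.elim id id k) * s) • β k := by
  classical
  set r : R → Fin l → R := fun s i => β.repr (φ (s • β (Sum.inr i))) (Sum.inr i) with hrdef
  have stepx : ∀ (s : R) (i : Fin l),
      φ (s • β (Sum.inr i)) = r s i • β (Sum.inr i) := by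
    intro s i
    have h1 : ⁅β (Sum.inl i), s • β (Sum.inr i)⁆ = s • β (Sum.inr i) := by
      rw [lie_smul, H3 i i, if_pos rfl]
    have h2 := (hφ (β (Sum.inl i)) (s • β (Sum.inr i))).2
    rw [h1, key1 β H1 H3] at h2
    exact h2
  have steph : ∀ (s : R) (i : Fin l),
      φ (s • β (Sum.inl i)) = r s i • β (Sum.inl i) := by
    intro s i
    have hrj : ∀ j, β.repr (φ (s • β (Sum.inl i))) (Sum.inr j) = 0 := by
      intro j
      have h0 : ⁅β (Sum.inl j), s • β (Sum.inl i)⁆ = 0 := by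
        rw [lie_smul, H1 j i, smul_zero]
      have h2 := (hφ (β (Sum.inl j)) (s • β (Sum.inl i))).2
      rw [h0, map_zero, key1 β H1 H3] at h2
      have hz : β.repr (φ (s • β (Sum.inl i))) (Sum.inr j) • β (Sum.inr j)
          = (0 : R) • β (Sum.inr j) := by rw [← h2, zero_smul]
      exact coeff_cancel β hz
    have hlj : ∀ j, j ≠ i → β.repr (φ (s • β (Sum.inl i))) (Sum.inl j) = 0 := by
      intro j hj
      have h0 : ⁅s • β (Sum.inl i), β (Sum.inr j)⁆ = 0 := by
        rw [smul_lie, H3 i j, if_neg (fun hc => hj hc.symm), smul_zero]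
      have h2 := (hφ (s • β (Sum.inl i)) (β (Sum.inr j))).1
      rw [h0, map_zero, key2 β H2 H3] at h2
      have hz : β.repr (φ (s • β (Sum.inl i))) (Sum.inl j) • β (Sum.inr j)
          = (0 : R) • β (Sum.inr j) := by rw [← h2, zero_smul]
      exact coeff_cancel β hz
    have hli : β.repr (φ (s • β (Sum.inl i))) (Sum.inl i) = r s i := by
      have hbr : ⁅s • β (Sum.inl i), β (Sum.inr i)⁆ = s • β (Sum.inr i) := by
        rw [smul_lie, H3 i i, if_pos rfl]
      have h2 := (hφ (s • β (Sum.inl i)) (β (Sum.inr i))).1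
      rw [hbr, key2 β H2 H3, stepx s i] at h2
      exact (coeff_cancel β h2.symm)
    refine β.ext_elem fun k => ?_
    rcases k with j | j
    · rcases eq_or_ne j i with rfl | hj
      · simp [hli, Module.Basis.repr_self]
      · simp [hlj j hj, hj, hj.symm, Module.Basis.repr_self, Finsupp.single_apply]
    · simp [hrj j, Module.Basis.repr_self, Finsupp.single_apply]
  have stepmul : ∀ (s t : R) (i : Fin l), r (s * t) i = r s i * t := by
    intro s t i
    have hbr : ⁅s • β (Sum.inl i), t • β (Sum.inr i)⁆ = (s * t) • β (Sum.inr i) := by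
      rw [smul_lie, lie_smul, H3 i i, if_pos rfl, smul_smul]
    have h2 := (hφ (s • β (Sum.inl i)) (t • β (Sum.inr i))).1
    rw [hbr, steph s i, smul_lie, lie_smul, H3 i i, if_pos rfl, smul_smul,
      stepx (s * t) i] at h2
    exact coeff_cancel β h2
  refine ⟨fun i => r 1 i, fun s k => ?_⟩
  have hrs : ∀ i, r s i = r 1 i * s := by
    intro i
    rw [← stepmul 1 s i, one_mul]
  rcases k with i | i
  · simpa [hrs i] using steph s i
  · simpa [hrs i] using stepx s i

include H1 H2 H3 in
private lemma master_mem (f : Fin l → R) :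
    (↑(β.constr F fun k => f (Sum.elim id id k) • β k) : M →ₗ[R] M).restrictScalars F
      ∈ lieCentroid F M := by
  classical
  set D : M →ₗ[R] M := β.constr F fun k => f (Sum.elim id id k) • β k with hD
  have hDb : ∀ k, D (β k) = f (Sum.elim id id k) • β k := fun k => β.constr_basis _ _ _
  have hkey : ∀ k k', D ⁅β k, β k'⁆ = f (Sum.elim id id k) • ⁅β k, β k'⁆ ∧
      D ⁅β k, β k'⁆ = f (Sum.elim id id k') • ⁅β k, β k'⁆ := by
    rintro (i | i) (j | j)
    · rw [H1 i j]; simp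
    · rcases eq_or_ne i j with rfl | hij
      · rw [H3 i i, if_pos rfl]
        exact ⟨hDb (Sum.inr i), hDb (Sum.inr i)⟩
      · rw [H3 i j, if_neg hij]; simp
    · rcases eq_or_ne j i with rfl | hji
      · rw [H4 β H3, if_pos rfl]
        refine ⟨?_, ?_⟩ <;> simp [map_neg, hDb, smul_neg]
      · rw [H4 β H3 i j, if_neg hji]; simp
    · rw [H2 i j]; simp
  have eq1 : LinearMap.llcomp R M M M D ∘ₗ (LieModule.toEnd R M M).toLinearMap = (LieModule.toEnd R M M).toLinearMap ∘ₗ D := by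
    refine β.ext fun k => ?_
    refine β.ext fun k' => ?_
    simp only [LinearMap.comp_apply, LinearMap.llcomp_apply,
      LieHom.coe_toLinearMap, LieModule.toEnd_apply_apply, hDb k, smul_lie]
    exact (hkey k k').1
  have eq2 : LinearMap.llcomp R M M M D ∘ₗ (LieModule.toEnd R M M).toLinearMap = LinearMap.lcomp R M D ∘ₗ (LieModule.toEnd R M M).toLinearMap := by
    refine β.ext fun k => ?_
    refine β.ext fun k' => ?_
    simp only [LinearMap.comp_apply, LinearMap.llcomp_apply, LinearMap.lcomp_apply,
      LieHom.coe_toLinearMap, LieModule.toEnd_apply_apply, hDb k', lie_smul]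
    exact (hkey k k').2
  intro u v
  constructor
  · have := LinearMap.congr_fun (LinearMap.congr_fun eq1 u) v
    simpa [LieModule.toEnd_apply_apply] using this
  · have := LinearMap.congr_fun (LinearMap.congr_fun eq2 u) v
    simpa [LieModule.toEnd_apply_apply] using this

include H1 H2 H3 in
private lemma master_eq_of {φ ψ : M →ₗ[F] M}
    (hagree : ∀ (s : R) (k : Fin l ⊕ Fin l), φ (s • β k) = ψ (s • β k)) : φ = ψ := by
  ext w
  rw [← β.sum_repr w, map_sum, map_sum]
  exact Finset.sum_congr rfl fun k _ => hagree _ k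

/-- The `F`-linear map from coefficient functions to endomorphisms. -/
noncomputable def masterToFun : (Fin l → R) →ₗ[F] (M →ₗ[F] M) where
  toFun f := (↑(β.constr F fun k => f (Sum.elim id id k) • β k) : M →ₗ[R] M).restrictScalars F
  map_add' f g := by
    have : (β.constr F fun k => (f + g) (Sum.elim id id k) • β k)
        = (β.constr F fun k => f (Sum.elim id id k) • β k)
          + (β.constr F fun k => g (Sum.elim id id k) • β k) := by
      rw [← map_add]
      congr 1
      funext k
      simp [add_smul]
    ext w
    exact LinearMap.congr_fun
      (congrArg (LinearMap.restrictScalars F : (M →ₗ[R] M) → (M →ₗ[F] M)) this) w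
  map_smul' c f := by
    have : (β.constr F fun k => (c • f) (Sum.elim id id k) • β k)
        = c • (β.constr F fun k => f (Sum.elim id id k) • β k) := by
      rw [← map_smul]
      congr 1
      funext k
      simp [smul_assoc]
    ext w
    exact LinearMap.congr_fun
      (congrArg (LinearMap.restrictScalars F : (M →ₗ[R] M) → (M →ₗ[F] M)) this) w

lemma masterToFun_apply (f : Fin l → R) (s : R) (k : Fin l ⊕ Fin l) :
    masterToFun (F := F) β f (s • β k) = (f (Sum.elim id id k) * s) • β k := by
  have : masterToFun (F := F) β f (s • β k)
      = (↑(β.constr F fun k => f (Sum.elim id id k) • β k) : M →ₗ[R] M) (s • β k) := rfl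
  rw [this, map_smul, β.constr_basis, smul_smul, mul_comm]

/-- The master equivalence between coefficient functions and the centroid. -/
noncomputable def masterEquiv : (Fin l → R) ≃ₗ[F] lieCentroid F M where
  __ := (masterToFun (F := F) β).codRestrict (lieCentroid F M) (fun f => master_mem β H1 H2 H3 f)
  invFun φ := fun i => β.repr ((φ : M →ₗ[F] M) (β (Sum.inr i))) (Sum.inr i)
  left_inv f := by
    funext i
    have h2 : masterToFun (F := F) β f (β (Sum.inr i)) = (f i * 1) • β (Sum.inr i) := by
      have h1 : β (Sum.inr i) = (1 : R) • β (Sum.inr i) := (one_smul R _).symm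
      conv_lhs => rw [h1]
      rw [masterToFun_apply]
      simp
    show β.repr (masterToFun (F := F) β f (β (Sum.inr i))) (Sum.inr i) = f i
    rw [h2]
    simp [Module.Basis.repr_self]
  right_inv φ := by
    obtain ⟨f₀, hf₀⟩ := master_class β H1 H2 H3 φ.2
    apply Subtype.ext
    refine master_eq_of β H1 H2 H3 (ψ := (φ : M →ₗ[F] M)) fun s k => ?_
    have hcoef : ∀ i : Fin l,
        β.repr ((φ : M →ₗ[F] M) (β (Sum.inr i))) (Sum.inr i) = f₀ i := by
      intro i
      have h1 : β (Sum.inr i) = (1 : R) • β (Sum.inr i) := (one_smul R _).symm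
      rw [h1, hf₀ 1 (Sum.inr i)]
      simp [Module.Basis.repr_self, Finsupp.single_apply]
    show masterToFun (F := F) β _ (s • β k) = _
    rw [masterToFun_apply, hf₀ s k]
    congr 2
    rcases k with i | i <;> simp [hcoef]

lemma masterEquiv_coe_apply (f : Fin l → R) (s : R) (k : Fin l ⊕ Fin l) :
    ((masterEquiv β H1 H2 H3 f : lieCentroid F M) : M →ₗ[F] M) (s • β k)
      = (f (Sum.elim id id k) * s) • β k :=
  masterToFun_apply β f s k

end Master


set_option maxHeartbeats 1000000 in
/-- Lemma 4.5. For the metabelian Lie algebra `L` with basis `hᵢ, xᵢ` and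
`S = F[t,t⁻¹]`, the centroid of the loop algebra `L ⊗ S` is commutative and is isomorphic to
`Cent(L) ⊗ S`, via the natural map `λ ⊗ f ↦ (s ⊗ y ↦ (f·s) ⊗ λ(y))`. -/
theorem centroid_of_loop_algebra
    (F : Type*) [Field F] [CharZero F] (l : ℕ)
    (L : Type*) [LieRing L] [LieAlgebra F L]
    (h x : Fin l → L) (b : Module.Basis (Fin l ⊕ Fin l) F L)
    (hb : ∀ i, b (Sum.inl i) = h i ∧ b (Sum.inr i) = x i)
    (hhh : ∀ i j, ⁅h i, h j⁆ = 0) (hxx : ∀ i j, ⁅x i, x j⁆ = 0)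
    (hhx : ∀ i j, ⁅h i, x j⁆ = if i = j then x j else 0) :
    (∀ φ ψ : LaurentPolynomial F ⊗[F] L →ₗ[F] LaurentPolynomial F ⊗[F] L,
        φ ∈ lieCentroid F (LaurentPolynomial F ⊗[F] L) →
        ψ ∈ lieCentroid F (LaurentPolynomial F ⊗[F] L) → φ ∘ₗ ψ = ψ ∘ₗ φ) ∧
    ∃ e : (lieCentroid F L ⊗[F] LaurentPolynomial F) ≃ₗ[F]
          lieCentroid F (LaurentPolynomial F ⊗[F] L),
      ∀ (φ : lieCentroid F L) (f s : LaurentPolynomial F) (y : L),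
        (e (φ ⊗ₜ[F] f) : LaurentPolynomial F ⊗[F] L →ₗ[F] LaurentPolynomial F ⊗[F] L)
            (s ⊗ₜ[F] y) = (f * s) ⊗ₜ[F] ((φ : L →ₗ[F] L) y) := by
  classical
  have H1L : ∀ i j : Fin l, ⁅b (Sum.inl i), b (Sum.inl j)⁆ = 0 := by
    intro i j; rw [(hb i).1, (hb j).1]; exact hhh i j
  have H2L : ∀ i j : Fin l, ⁅b (Sum.inr i), b (Sum.inr j)⁆ = 0 := by
    intro i j; rw [(hb i).2, (hb j).2]; exact hxx i j
  have H3L : ∀ i j : Fin l,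
      ⁅b (Sum.inl i), b (Sum.inr j)⁆ = if i = j then b (Sum.inr j) else 0 := by
    intro i j; rw [(hb i).1, (hb j).2]; exact hhx i j
  set bt : Module.Basis (Fin l ⊕ Fin l) (LaurentPolynomial F) (LaurentPolynomial F ⊗[F] L) :=
    b.baseChange (LaurentPolynomial F) with hbt
  have H1A : ∀ i j : Fin l, ⁅bt (Sum.inl i), bt (Sum.inl j)⁆ = 0 := by
    intro i j
    rw [hbt]
    simp [Module.Basis.baseChange_apply, LieAlgebra.ExtendScalars.bracket_tmul, H1L i j]
  have H2A : ∀ i j : Fin l, ⁅bt (Sum.inr i), bt (Sum.inr j)⁆ = 0 := by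
    intro i j
    rw [hbt]
    simp [Module.Basis.baseChange_apply, LieAlgebra.ExtendScalars.bracket_tmul, H2L i j]
  have H3A : ∀ i j : Fin l,
      ⁅bt (Sum.inl i), bt (Sum.inr j)⁆ = if i = j then bt (Sum.inr j) else 0 := by
    intro i j
    rw [hbt]
    simp only [Module.Basis.baseChange_apply, LieAlgebra.ExtendScalars.bracket_tmul, one_mul, H3L i j]
    split <;> simp
  refine ⟨?_, ?_⟩
  · intro φ ψ hφ hψ
    obtain ⟨f, hf⟩ := master_class bt H1A H2A H3A hφ
    obtain ⟨g, hg⟩ := master_class bt H1A H2A H3A hψ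
    refine master_eq_of bt H1A H2A H3A fun s k => ?_
    rw [LinearMap.comp_apply, hg s k, hf _ k, LinearMap.comp_apply, hf s k, hg _ k]
    congr 1
    ring
  · set E1 := masterEquiv (F := F) b H1L H2L H3L with hE1
    set E2 := masterEquiv (F := F) bt H1A H2A H3A with hE2
    refine ⟨(TensorProduct.congr E1.symm (LinearEquiv.refl F (LaurentPolynomial F))).trans
        ((TensorProduct.comm F _ _).trans
          ((TensorProduct.piScalarRight F F (LaurentPolynomial F) (Fin l)).trans E2)), ?_⟩
    intro φ f s y
    set c : Fin l → F := E1.symm φ with hc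
    have he : ((TensorProduct.congr E1.symm (LinearEquiv.refl F (LaurentPolynomial F))).trans
        ((TensorProduct.comm F _ _).trans
          ((TensorProduct.piScalarRight F F (LaurentPolynomial F) (Fin l)).trans E2)))
            (φ ⊗ₜ[F] f) = E2 (fun j => c j • f) := by
      rw [LinearEquiv.trans_apply, TensorProduct.congr_tmul, LinearEquiv.refl_apply,
        LinearEquiv.trans_apply, TensorProduct.comm_tmul, LinearEquiv.trans_apply,
        TensorProduct.piScalarRight_apply, TensorProduct.piScalarRightHom_tmul]
    rw [he]
    have hφb : ∀ k, (φ : L →ₗ[F] L) (b k) = c (Sum.elim id id k) • b k := by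
      intro k
      have h1 : (E1 c : lieCentroid F L) = φ := E1.apply_symm_apply φ
      rw [← h1]
      have h0 := masterEquiv_coe_apply (F := F) b H1L H2L H3L c 1 k
      rw [one_smul, mul_one] at h0
      exact h0
    have hterm : ∀ k, ((E2 (fun j => c j • f) :
        lieCentroid F (LaurentPolynomial F ⊗[F] L)) :
          LaurentPolynomial F ⊗[F] L →ₗ[F] LaurentPolynomial F ⊗[F] L) (s ⊗ₜ[F] b k)
          = (f * s) ⊗ₜ[F] ((φ : L →ₗ[F] L) (b k)) := by
      intro k
      have hsm : s ⊗ₜ[F] (b k) = s • bt k := by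
        rw [hbt]
        simp [Module.Basis.baseChange_apply, TensorProduct.smul_tmul']
      rw [hsm, masterEquiv_coe_apply (F := F) bt H1A H2A H3A, hφb k, hbt]
      simp [Module.Basis.baseChange_apply, smul_mul_assoc, smul_assoc,
        TensorProduct.tmul_smul, TensorProduct.smul_tmul', smul_eq_mul, mul_one]
    calc ((E2 (fun j => c j • f) : lieCentroid F (LaurentPolynomial F ⊗[F] L)) :
        LaurentPolynomial F ⊗[F] L →ₗ[F] LaurentPolynomial F ⊗[F] L) (s ⊗ₜ[F] y)
        = ((E2 (fun j => c j • f) : lieCentroid F (LaurentPolynomial F ⊗[F] L)) :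
          LaurentPolynomial F ⊗[F] L →ₗ[F] LaurentPolynomial F ⊗[F] L)
            (s ⊗ₜ[F] (∑ k, b.repr y k • b k)) := by rw [b.sum_repr y]
      _ = ∑ k, b.repr y k • ((E2 (fun j => c j • f) :
            lieCentroid F (LaurentPolynomial F ⊗[F] L)) :
          LaurentPolynomial F ⊗[F] L →ₗ[F] LaurentPolynomial F ⊗[F] L) (s ⊗ₜ[F] b k) := by
          rw [TensorProduct.tmul_sum, map_sum]
          exact Finset.sum_congr rfl fun k _ => by rw [TensorProduct.tmul_smul, map_smul]
      _ = ∑ k, b.repr y k • ((f * s) ⊗ₜ[F] ((φ : L →ₗ[F] L) (b k))) :=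
          Finset.sum_congr rfl fun k _ => by rw [hterm k]
      _ = (f * s) ⊗ₜ[F] ((φ : L →ₗ[F] L) (∑ k, b.repr y k • b k)) := by
          rw [map_sum, TensorProduct.tmul_sum]
          exact Finset.sum_congr rfl fun k _ => by rw [map_smul, TensorProduct.tmul_smul]
      _ = (f * s) ⊗ₜ[F] ((φ : L →ₗ[F] L) y) := by rw [b.sum_repr y]
end

section
/- Let L be the Lie algebra with basis h₁,…,h_l,x₁,…,x_l and brackets ⁅h_i,h_j⁆=⁅x_i,x_j⁆=0, ⁅h_i,x_j⁆=δ_{ij}x_j, and S = F[t,t⁻¹]. Every derivation D of the loop algebra L⊗S that annihilates L⊗1 is of the form D(h_i⊗tʲ) = h_i ⊗ j t^{j-1} f_i(t) and D(x_i⊗tʲ) = x_i ⊗ j t^{j-1} f_i(t) for some Laurent polynomials f₁,…,f_l ∈ S. In particular, if such a D is an almost inner derivation of L⊗S, then D = 0. -/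
open scoped TensorProduct
open LaurentPolynomial

/-- Lemma 4.7. Every derivation `D` of the loop algebra `L ⊗ S` annihilating
`L ⊗ 1` satisfies `D(h_i ⊗ tʲ) = h_i ⊗ j t^{j-1} f_i(t)` and
`D(x_i ⊗ tʲ) = x_i ⊗ j t^{j-1} f_i(t)` for some Laurent polynomials `f₁,…,f_l`; in particular,
if such a `D` is almost inner, then `D = 0`. -/
theorem derivation_annihilating_L_tensor_one
    (F : Type*) [Field F] [CharZero F] (l : ℕ)
    (L : Type*) [LieRing L] [LieAlgebra F L]
    (h x : Fin l → L) (b : Module.Basis (Fin l ⊕ Fin l) F L)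
    (hb : ∀ i, b (Sum.inl i) = h i ∧ b (Sum.inr i) = x i)
    (hhh : ∀ i j, ⁅h i, h j⁆ = 0) (hxx : ∀ i j, ⁅x i, x j⁆ = 0)
    (hhx : ∀ i j, ⁅h i, x j⁆ = if i = j then x j else 0)
    (D : LaurentPolynomial F ⊗[F] L →ₗ[F] LaurentPolynomial F ⊗[F] L)
    (hder : ∀ u v : LaurentPolynomial F ⊗[F] L, D ⁅u, v⁆ = ⁅D u, v⁆ + ⁅u, D v⁆)
    (hone : ∀ y : L, D ((1 : LaurentPolynomial F) ⊗ₜ[F] y) = 0) :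
    (∃ f : Fin l → LaurentPolynomial F, ∀ (i : Fin l) (j : ℤ),
        D (LaurentPolynomial.T j ⊗ₜ[F] h i) =
          (j • (LaurentPolynomial.T (j - 1) * f i)) ⊗ₜ[F] h i ∧
        D (LaurentPolynomial.T j ⊗ₜ[F] x i) =
          (j • (LaurentPolynomial.T (j - 1) * f i)) ⊗ₜ[F] x i) ∧
    ((∀ w : LaurentPolynomial F ⊗[F] L,
        ∃ u : LaurentPolynomial F ⊗[F] L, D w = ⁅w, u⁆) → D = 0) := by
  classical
  have hb1 : ∀ i, b (Sum.inl i) = h i := fun i => (hb i).1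
  have hb2 : ∀ i, b (Sum.inr i) = x i := fun i => (hb i).2
  -- bilinearity of the tensor-product bracket, re-proved for the ambient instance
  have tlz : ∀ u : LaurentPolynomial F ⊗[F] L,
      ⁅u, (0 : LaurentPolynomial F ⊗[F] L)⁆ = 0 := fun u => lie_zero u
  have tzl : ∀ u : LaurentPolynomial F ⊗[F] L,
      ⁅(0 : LaurentPolynomial F ⊗[F] L), u⁆ = 0 := fun u => zero_lie u
  have tal : ∀ u v w : LaurentPolynomial F ⊗[F] L,
      ⁅u + v, w⁆ = ⁅u, w⁆ + ⁅v, w⁆ := fun u v w => add_lie u v w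
  have tla : ∀ u v w : LaurentPolynomial F ⊗[F] L,
      ⁅u, v + w⁆ = ⁅u, v⁆ + ⁅u, w⁆ := fun u v w => lie_add u v w
  -- sums out of the first slot of the bracket in L
  have sum_lie' : ∀ (g : (Fin l ⊕ Fin l) → L) (z : L),
      ⁅∑ k, g k, z⁆ = ∑ k, ⁅g k, z⁆ := fun g z =>
    map_sum (AddMonoidHom.mk' (fun y => ⁅y, z⁆) (fun a b' => add_lie a b' z)) g Finset.univ
  -- coordinate maps
  set c : (Fin l ⊕ Fin l) → (LaurentPolynomial F ⊗[F] L →ₗ[F] LaurentPolynomial F) :=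
    fun k => (TensorProduct.rid F (LaurentPolynomial F)).toLinearMap ∘ₗ
      LinearMap.lTensor (LaurentPolynomial F) (b.coord k) with hc_def
  have hc : ∀ (k) (p : LaurentPolynomial F) (y : L), c k (p ⊗ₜ[F] y) = b.repr y k • p := by
    intro k p y
    simp [hc_def, LinearMap.lTensor_tmul, TensorProduct.rid_tmul]
  have hbr : ∀ (p q : LaurentPolynomial F) (y z : L),
      ⁅p ⊗ₜ[F] y, q ⊗ₜ[F] z⁆ = (p * q) ⊗ₜ[F] ⁅y, z⁆ := fun p q y z =>
    LieAlgebra.ExtendScalars.bracket_tmul F _ L L p q y z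
  have hrh : ∀ i k, b.repr (h i) k = if Sum.inl i = k then 1 else 0 := by
    intro i k; rw [← hb1 i, b.repr_self]; exact Finsupp.single_apply
  have hrx : ∀ i k, b.repr (x i) k = if Sum.inr i = k then 1 else 0 := by
    intro i k; rw [← hb2 i, b.repr_self]; exact Finsupp.single_apply
  -- reconstruction
  have hrec : ∀ w : LaurentPolynomial F ⊗[F] L, ∑ k, (c k w) ⊗ₜ[F] b k = w := by
    intro w
    induction w using TensorProduct.induction_on with
    | zero => simp
    | tmul p y =>
        have e : ∀ k, (c k (p ⊗ₜ[F] y)) ⊗ₜ[F] b k = p ⊗ₜ[F] (b.repr y k • b k) := by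
          intro k; rw [hc, TensorProduct.smul_tmul]
        rw [Finset.sum_congr rfl (fun k _ => e k), ← TensorProduct.tmul_sum, b.sum_repr y]
    | add u v hu hv =>
        simp only [map_add, TensorProduct.add_tmul, Finset.sum_add_distrib, hu, hv]
  have hinjx : ∀ (m : Fin l) (q q' : LaurentPolynomial F),
      q ⊗ₜ[F] x m = q' ⊗ₜ[F] x m → q = q' := by
    intro m q q' hqq
    have := congrArg (c (Sum.inr m)) hqq
    simpa [hc, hrx] using this
  -- brackets with the basis vectors, inside L
  have lieyh : ∀ (m : Fin l) (y : L), ⁅y, h m⁆ = -((b.repr y (Sum.inr m)) • x m) := by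
    intro m y
    conv_lhs => rw [← b.sum_repr y]
    rw [sum_lie']
    have e : ∀ k, ⁅b.repr y k • b k, h m⁆
        = (if Sum.inr m = k then -(b.repr y (Sum.inr m) • x m) else 0) := by
      intro k
      rcases k with i | i
      · simp [smul_lie, hb1, hhh]
      · rw [smul_lie, hb2, ← lie_skew, hhx]
        by_cases hmi : m = i
        · subst hmi; simp
        · simp [hmi, fun hh : Sum.inr m = Sum.inr i => hmi (Sum.inr.inj hh)]
    rw [Finset.sum_congr rfl (fun k _ => e k), Finset.sum_ite_eq]
    simp
  have lieyx : ∀ (m : Fin l) (y : L), ⁅y, x m⁆ = (b.repr y (Sum.inl m)) • x m := by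
    intro m y
    conv_lhs => rw [← b.sum_repr y]
    rw [sum_lie']
    have e : ∀ k, ⁅b.repr y k • b k, x m⁆
        = (if Sum.inl m = k then b.repr y (Sum.inl m) • x m else 0) := by
      intro k
      rcases k with i | i
      · rw [smul_lie, hb1, hhx]
        by_cases him : i = m
        · subst him; simp
        · simp [him, Ne.symm him]
      · simp [smul_lie, hb2, hxx]
    rw [Finset.sum_congr rfl (fun k _ => e k), Finset.sum_ite_eq]
    simp
  -- brackets of arbitrary elements with 1 ⊗ h m and 1 ⊗ x m
  have hlieh : ∀ (w : LaurentPolynomial F ⊗[F] L) (m : Fin l),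
      ⁅w, (1 : LaurentPolynomial F) ⊗ₜ[F] h m⁆ = -((c (Sum.inr m) w) ⊗ₜ[F] x m) := by
    intro w m
    induction w using TensorProduct.induction_on with
    | zero => rw [tzl, map_zero, TensorProduct.zero_tmul, neg_zero]
    | tmul p y =>
        rw [hbr, mul_one, lieyh, hc, TensorProduct.tmul_neg, TensorProduct.tmul_smul,
          TensorProduct.smul_tmul']
    | add u v hu hv => rw [tal, hu, hv, map_add, TensorProduct.add_tmul, neg_add]
  have hliex : ∀ (w : LaurentPolynomial F ⊗[F] L) (m : Fin l),
      ⁅w, (1 : LaurentPolynomial F) ⊗ₜ[F] x m⁆ = (c (Sum.inl m) w) ⊗ₜ[F] x m := by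
    intro w m
    induction w using TensorProduct.induction_on with
    | zero => rw [tzl, map_zero, TensorProduct.zero_tmul]
    | tmul p y =>
        rw [hbr, mul_one, lieyx, hc, TensorProduct.tmul_smul, TensorProduct.smul_tmul']
    | add u v hu hv => rw [tal, hu, hv, map_add, TensorProduct.add_tmul]
  -- the coefficient function
  set P : Fin l → ℤ → LaurentPolynomial F :=
    fun i j => c (Sum.inl i) (D (T j ⊗ₜ[F] h i)) with hP_def
  have hhxii : ∀ i : Fin l, ⁅h i, x i⁆ = x i := by intro i; rw [hhx]; simp
  -- structure of D (T j ⊗ h i)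
  have hDh : ∀ (i : Fin l) (j : ℤ), D (T j ⊗ₜ[F] h i) = (P i j) ⊗ₜ[F] h i := by
    intro i j
    have h1 : ∀ m, c (Sum.inr m) (D (T j ⊗ₜ[F] h i)) = 0 := by
      intro m
      have e := hder (T j ⊗ₜ[F] h i) ((1 : LaurentPolynomial F) ⊗ₜ[F] h m)
      rw [hbr, hhh, TensorProduct.tmul_zero, map_zero, hone, tlz, add_zero, hlieh] at e
      have e2 : (c (Sum.inr m) (D (T j ⊗ₜ[F] h i))) ⊗ₜ[F] x m
          = (0 : LaurentPolynomial F) ⊗ₜ[F] x m := by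
        rw [TensorProduct.zero_tmul]
        exact neg_eq_zero.mp e.symm
      exact hinjx m _ _ e2
    have h2 : ∀ m, m ≠ i → c (Sum.inl m) (D (T j ⊗ₜ[F] h i)) = 0 := by
      intro m hmi
      have hz : ⁅h i, x m⁆ = 0 := by rw [hhx]; exact if_neg (fun e => hmi e.symm)
      have e := hder (T j ⊗ₜ[F] h i) ((1 : LaurentPolynomial F) ⊗ₜ[F] x m)
      rw [hbr, hz, TensorProduct.tmul_zero, map_zero, hone, tlz, add_zero, hliex] at e
      have e2 : (c (Sum.inl m) (D (T j ⊗ₜ[F] h i))) ⊗ₜ[F] x m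
          = (0 : LaurentPolynomial F) ⊗ₜ[F] x m := by
        rw [TensorProduct.zero_tmul]; exact e.symm
      exact hinjx m _ _ e2
    calc D (T j ⊗ₜ[F] h i) = ∑ k, (c k (D (T j ⊗ₜ[F] h i))) ⊗ₜ[F] b k := (hrec _).symm
      _ = (P i j) ⊗ₜ[F] h i := by
          rw [Fintype.sum_sum_type]
          have e2 : ∀ m : Fin l, (c (Sum.inr m) (D (T j ⊗ₜ[F] h i))) ⊗ₜ[F] b (Sum.inr m)
              = 0 := by
            intro m; rw [h1 m, TensorProduct.zero_tmul]
          have e1 : ∀ m : Fin l, (c (Sum.inl m) (D (T j ⊗ₜ[F] h i))) ⊗ₜ[F] b (Sum.inl m)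
              = if m = i then (P i j) ⊗ₜ[F] h i else 0 := by
            intro m
            by_cases hmi : m = i
            · subst hmi; rw [if_pos rfl, hb1]
            · rw [if_neg hmi, h2 m hmi, TensorProduct.zero_tmul]
          rw [Finset.sum_congr rfl (fun m _ => e1 m), Finset.sum_congr rfl (fun m _ => e2 m)]
          simp
  have hDx : ∀ (i : Fin l) (j : ℤ), D (T j ⊗ₜ[F] x i) = (P i j) ⊗ₜ[F] x i := by
    intro i j
    have e := hder (T j ⊗ₜ[F] h i) ((1 : LaurentPolynomial F) ⊗ₜ[F] x i)
    rw [hbr, hhxii, mul_one, hone, tlz, add_zero, hDh, hbr, mul_one, hhxii] at e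
    exact e
  -- functional equation
  have hfe : ∀ (i : Fin l) (j k : ℤ), P i (j + k) = T k * P i j + T j * P i k := by
    intro i j k
    have e := hder (T j ⊗ₜ[F] h i) (T k ⊗ₜ[F] x i)
    rw [hbr, hhxii, ← T_add, hDx, hDh, hDx, hbr, hbr, hhxii] at e
    refine hinjx i _ _ (e.trans ?_)
    rw [mul_comm (P i j) (T k), ← TensorProduct.add_tmul]
  have hP0 : ∀ i : Fin l, P i 0 = 0 := by
    intro i
    have e : D (T (0 : ℤ) ⊗ₜ[F] h i) = 0 := by rw [T_zero]; exact hone (h i)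
    have : P i 0 = c (Sum.inl i) (D (T (0 : ℤ) ⊗ₜ[F] h i)) := rfl
    rw [this, e, map_zero]
  -- the coefficient P i j equals j • T^(j-1) * P i 1
  have hPj : ∀ (i : Fin l) (j : ℤ), P i j = j • (T (j - 1) * P i 1) := by
    intro i j
    have hadd : ∀ j k : ℤ, T (-(j + k)) * P i (j + k)
        = T (-j) * P i j + T (-k) * P i k := by
      intro j k
      rw [hfe i j k, mul_add, ← mul_assoc, ← mul_assoc, ← T_add, ← T_add,
        (show -(j + k) + k = -j by ring), (show -(j + k) + j = -k by ring)]
    have key : T (-j) * P i j = j • (T (-1 : ℤ) * P i 1) :=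
      AddMonoidHom.apply_int (f := AddMonoidHom.mk' (fun j : ℤ => T (-j) * P i j) hadd) (n := j)
    have e : P i j = T j * (T (-j) * P i j) := by
      rw [← mul_assoc, ← T_add, add_neg_cancel, T_zero, one_mul]
    rw [sub_eq_add_neg, e, key, mul_smul_comm, ← mul_assoc, ← T_add]
  refine ⟨⟨fun i => P i 1, fun i j => ⟨by rw [hDh, hPj], by rw [hDx, hPj]⟩⟩, ?_⟩
  -- almost inner implies D = 0
  intro hai
  have hbrz : ∀ (i : Fin l) (u : LaurentPolynomial F ⊗[F] L),
      c (Sum.inl i) ⁅(T 1 : LaurentPolynomial F) ⊗ₜ[F] h i, u⁆ = 0 := by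
    intro i u
    induction u using TensorProduct.induction_on with
    | zero => rw [tlz, map_zero]
    | tmul q y =>
        rw [hbr, hc]
        have e : ⁅h i, y⁆ = b.repr y (Sum.inr i) • x i := by
          rw [← lie_skew, lieyh, neg_neg]
        rw [e, map_smul, Finsupp.smul_apply, hrx]
        simp
    | add u v hu hv => rw [tla, map_add, hu, hv, add_zero]
  have hf0 : ∀ i : Fin l, P i 1 = 0 := by
    intro i
    obtain ⟨u, hu⟩ := hai ((T 1 : LaurentPolynomial F) ⊗ₜ[F] h i)
    have e : P i 1 = c (Sum.inl i) (D ((T 1 : LaurentPolynomial F) ⊗ₜ[F] h i)) := rfl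
    rw [e, hu, hbrz]
  have hzero : ∀ (n : ℤ) (k : Fin l ⊕ Fin l), D (T n ⊗ₜ[F] b k) = 0 := by
    intro n k
    rcases k with i | i
    · rw [hb1, hDh, hPj, hf0]; simp
    · rw [hb2, hDx, hPj, hf0]; simp
  have hz2 : ∀ (q : LaurentPolynomial F) (k : Fin l ⊕ Fin l), D (q ⊗ₜ[F] b k) = 0 := by
    intro q k
    induction q using LaurentPolynomial.induction_on' with
    | add p q hp hq => rw [TensorProduct.add_tmul, map_add, hp, hq, add_zero]
    | C_mul_T n a =>
        have e : (C a * T n) ⊗ₜ[F] b k = a • (T n ⊗ₜ[F] b k) := by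
          rw [C_eq_algebraMap, ← Algebra.smul_def, TensorProduct.smul_tmul']
        rw [e, map_smul, hzero, smul_zero]
  apply LinearMap.ext
  intro w
  rw [LinearMap.zero_apply]
  calc D w = D (∑ k, (c k w) ⊗ₜ[F] b k) := by rw [hrec]
    _ = ∑ k, D ((c k w) ⊗ₜ[F] b k) := map_sum _ _ _
    _ = 0 := by simp only [hz2]; simp
end

section
/- Let L̃ be the affinization of a Lie algebra L with invariant symmetric bilinear form, and D an almost inner derivation of L̃. Then the induced map D̄ on L̃/FK defined by D̄(w̄) = (D(w))‾ is a well-defined almost inner derivation of the quotient Lie algebra L̃/FK. -/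
/-- Lemma 5.1 (first part). If `D` is an almost inner derivation of the
affinization `L̃`, the induced map `D̄` on the quotient `L̃/FK` is a well-defined almost
inner derivation of `L̃/FK`. -/
theorem induced_derivation_on_quotient_is_almost_inner
    (F : Type*) [Field F] [CharZero F]
    (L : Type*) [LieRing L] [LieAlgebra F L]
    (B : L →ₗ[F] L →ₗ[F] F)
    (hBsymm : ∀ u v : L, B u v = B v u)
    (hBinv : ∀ u v w : L, B ⁅u, v⁆ w = B u ⁅v, w⁆)
    (Lt : Type*) [LieRing Lt] [LieAlgebra F Lt]
    (ε : ℤ → L →ₗ[F] Lt) (K : Lt)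
    (hK : ∀ w : Lt, ⁅K, w⁆ = 0)
    (hbr : ∀ (m n : ℤ) (u v : L),
      ⁅ε m u, ε n v⁆ = ε (m + n) ⁅u, v⁆ + (if m + n = 0 then (m : F) * B u v else 0) • K)
    (hspan : Submodule.span F ({K} ∪ ⋃ m : ℤ, Set.range (ε m)) = ⊤)
    (J : LieIdeal F Lt) (hJ : (J : Submodule F Lt) = Submodule.span F {K})
    (D : LieDerivation F Lt Lt)
    (hD : ∀ w : Lt, ∃ u : Lt, D w = ⁅w, u⁆) :
    ∃ Dbar : LieDerivation F (Lt ⧸ J) (Lt ⧸ J),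
      (∀ w : Lt, Dbar (LieSubmodule.Quotient.mk' J w) = LieSubmodule.Quotient.mk' J (D w)) ∧
      (∀ v : Lt ⧸ J, ∃ u : Lt ⧸ J, Dbar v = ⁅v, u⁆) := by
  have hDK : D K = 0 := by
    obtain ⟨u, hu⟩ := hD K
    rw [hu, hK]
  -- D maps J into J
  have hDJ : ∀ x ∈ (J : Submodule F Lt), D x ∈ (J : Submodule F Lt) := by
    intro x hx
    rw [hJ, Submodule.mem_span_singleton] at hx ⊢
    obtain ⟨c, rfl⟩ := hx
    exact ⟨0, by rw [map_smul, hDK, smul_zero, zero_smul]⟩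
  let π : Lt →ₗ[F] Lt ⧸ J := (LieSubmodule.Quotient.mk' J : Lt →ₗ⁅F,Lt⁆ Lt ⧸ J)
  have hker : (J : Submodule F Lt) ≤ LinearMap.ker (π ∘ₗ D.toLinearMap) := by
    intro x hx
    simp only [LinearMap.mem_ker, LinearMap.comp_apply]
    have : D x ∈ (J : Submodule F Lt) := hDJ x hx
    exact (LieSubmodule.Quotient.mk_eq_zero J).mpr this
  let f : Lt ⧸ J →ₗ[F] Lt ⧸ J :=
    Submodule.liftQ (J : Submodule F Lt) (π ∘ₗ D.toLinearMap) hker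
  have hf : ∀ w : Lt, f (LieSubmodule.Quotient.mk' J w) = LieSubmodule.Quotient.mk' J (D w) := by
    intro w
    rfl
  have hsurj : Function.Surjective (LieSubmodule.Quotient.mk' J : Lt →ₗ⁅F,Lt⁆ Lt ⧸ J) :=
    LieSubmodule.Quotient.surjective_mk' J
  have hmkbr : ∀ x y : Lt, (LieSubmodule.Quotient.mk' J ⁅x, y⁆ : Lt ⧸ J) =
      ⁅LieSubmodule.Quotient.mk' J x, LieSubmodule.Quotient.mk' J y⁆ := fun x y => rfl
  refine ⟨⟨f, ?_⟩, hf, ?_⟩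
  · intro a b
    obtain ⟨x, rfl⟩ := hsurj a
    obtain ⟨y, rfl⟩ := hsurj b
    rw [← hmkbr, hf, hf, hf, ← hmkbr, ← hmkbr]
    rw [D.apply_lie_eq_sub x y]
    simp [map_sub]
  · intro v
    obtain ⟨w, rfl⟩ := hsurj v
    obtain ⟨u, hu⟩ := hD w
    exact ⟨LieSubmodule.Quotient.mk' J u, by
      show f _ = _
      rw [hf, hu, hmkbr]⟩
end
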